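/- arXiv:math/0305391 — 11 statements merged into one kernel-verified Lean document; each statement's English description precedes it below -/
import Mathlib

section
/- Let (X, f) be a dynamical system where X is an infinite Hausdorff space. If f is topologically transitive and the set P of periodic points of f is dense in X, then (X, f) has DLP; that is, for every positive integer n, the set P \ P_n of periodic points of period strictly greater than n is dense in X. -/
open Function Set

/-- `f` is topologically transitive: from every nonempty open set some iterate
reaches every nonempty open set. -/
def TopTransitive {X : Type*} [TopologicalSpace X] (f : X → X) : Prop :=
  ∀ V W : Set X, IsOpen V → IsOpen W → V.Nonempty → W.Nonempty →
    ∃ n : ℕ, 0 < n ∧ (f^[n] '' V ∩ W).Nonempty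

/-- The set `P` of periodic points of `f`. -/
def PerPts {X : Type*} (f : X → X) : Set X :=
  {x | ∃ n : ℕ, 0 < n ∧ f^[n] x = x}

/-- The set `P_n` of periodic points of period at most `n`. -/
def PerPtsLe {X : Type*} (f : X → X) (n : ℕ) : Set X :=
  {x | ∃ m : ℕ, 0 < m ∧ m ≤ n ∧ f^[m] x = x}

/-- every topologically transitive map with dense periodic points on an
infinite Hausdorff space has dense large periodic points (DLP). -/
theorem dlp_of_transitive_of_densePeriodic
    {X : Type*} [TopologicalSpace X] [T2Space X] [Infinite X]
    (f : X → X) (hf : Continuous f)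
    (htrans : TopTransitive f)
    (hP : Dense (PerPts f)) :
    ∀ n : ℕ, 0 < n → Dense (PerPts f \ PerPtsLe f n) := by

  intro n hn
  rw [dense_iff_inter_open]
  intro U hU hUne
  by_contra hcon
  rw [Set.not_nonempty_iff_eq_empty] at hcon
  set L := n.factorial with hLdef
  have hL0 : 0 < L := n.factorial_pos
  -- every point of U is fixed by f^[L]
  have hfix : ∀ z ∈ U, f^[L] z = z := by
    have hsub : U ∩ PerPts f ⊆ {x : X | f^[L] x = x} := by
      rintro p ⟨hpU, hpP⟩
      have hpPn : p ∈ PerPtsLe f n := by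
        by_contra h
        have : p ∈ U ∩ (PerPts f \ PerPtsLe f n) := ⟨hpU, hpP, h⟩
        rw [hcon] at this
        exact this
      obtain ⟨m, hm0, hmn, hmp⟩ := hpPn
      obtain ⟨t, ht⟩ := Nat.dvd_factorial hm0 hmn
      show f^[L] p = p
      rw [hLdef, ht, Function.iterate_mul]
      exact Function.iterate_fixed hmp t
    have hclosed : IsClosed {x : X | f^[L] x = x} :=
      isClosed_eq (hf.iterate L) continuous_id
    intro z hz
    have h1 : z ∈ closure (U ∩ PerPts f) := hP.open_subset_closure_inter hU hz
    exact (closure_minimal hsub hclosed) h1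
  obtain ⟨x, hxU⟩ := hUne
  -- pick a point outside the (finite) orbit of x
  have hFfin : ((fun i => f^[i] x) '' Set.Iio L).Finite := (Set.finite_Iio L).image _
  obtain ⟨y, hy⟩ := hFfin.infinite_compl.nonempty
  have hsep : ∀ i : ℕ, ∃ A B : Set X,
      IsOpen A ∧ IsOpen B ∧ f^[i % L] x ∈ A ∧ y ∈ B ∧ Disjoint A B := by
    intro i
    have hne : f^[i % L] x ≠ y := by
      intro h
      exact hy ⟨i % L, Nat.mod_lt _ hL0, h⟩
    obtain ⟨A, B, hA, hB, hxA, hyB, hAB⟩ := t2_separation hne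
    exact ⟨A, B, hA, hB, hxA, hyB, hAB⟩
  choose A B hAo hBo hxA hyB hAB using hsep
  set W := ⋂ i ∈ Finset.range L, B i with hWdef
  set V := U ∩ ⋂ i ∈ Finset.range L, (f^[i]) ⁻¹' (A i) with hVdef
  have hWo : IsOpen W := isOpen_biInter_finset fun i _ => hBo i
  have hVo : IsOpen V := hU.inter (isOpen_biInter_finset fun i _ => ((hf.iterate i).isOpen_preimage _ (hAo i)))
  have hyW : y ∈ W := Set.mem_biInter fun i _ => hyB i
  have hxV : x ∈ V := by
    refine ⟨hxU, Set.mem_biInter fun i hi => ?_⟩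
    have : i % L = i := Nat.mod_eq_of_lt (Finset.mem_range.mp hi)
    have h := hxA i
    rw [this] at h
    exact h
  obtain ⟨k, hk0, w, hw⟩ := htrans V W hVo hWo ⟨x, hxV⟩ ⟨y, hyW⟩
  obtain ⟨⟨z, hzV, hzw⟩, hwW⟩ := hw
  have hzU : z ∈ U := hzV.1
  have hzfix : f^[L] z = z := hfix z hzU
  have hkey : f^[k] z = f^[k % L] z := by
    conv_lhs => rw [← Nat.div_add_mod k L]
    rw [Nat.add_comm, Function.iterate_add_apply, Function.iterate_mul]
    rw [Function.iterate_fixed hzfix]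
  have hr : k % L ∈ Finset.range L := Finset.mem_range.mpr (Nat.mod_lt _ hL0)
  have hzA : f^[k % L] z ∈ A (k % L) := Set.mem_iInter₂.mp hzV.2 _ hr
  have hzB : f^[k] z ∈ B (k % L) := by
    rw [hzw]
    exact Set.mem_iInter₂.mp hwW _ hr
  rw [hkey] at hzB
  exact (hAB (k % L)).ne_of_mem hzA hzB rfl
end

section
/- Let (X, f) be a dynamical system and let k be a positive integer. Suppose that whenever V and W are nonempty open sets in X, there is a positive integer n < k such that f^n(V) ∩ W is nonempty. Then X has at most k elements. -/
open Function Set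

/-- if some iterate before time  carries every nonempty open set
onto every nonempty open set, then X has at most k elements. -/
theorem card_le_of_uniformly_bounded_transitivity
    {X : Type*} [TopologicalSpace X] [T2Space X]
    (f : X → X) (hf : Continuous f) (k : ℕ) (hk : 0 < k)
    (h : ∀ V W : Set X, IsOpen V → IsOpen W → V.Nonempty → W.Nonempty →
      ∃ n : ℕ, 0 < n ∧ n < k ∧ (f^[n] '' V ∩ W).Nonempty) :
    Finite X ∧ Nat.card X ≤ k := by
  classical
  rcases isEmpty_or_nonempty X with hX | ⟨⟨x⟩⟩
  · exact ⟨inferInstance, by simp [Nat.card_of_isEmpty]⟩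
  -- Claim: every point of X is f^[n] x for some n ∈ [1, k)
  have key : ∀ y : X, ∃ n ∈ Finset.Ico 1 k, f^[n] x = y := by
    intro y
    by_contra hy
    push_neg at hy
    have sep : ∀ n ∈ Finset.Ico 1 k, ∃ p : Set X × Set X,
        IsOpen p.1 ∧ IsOpen p.2 ∧ f^[n] x ∈ p.1 ∧ y ∈ p.2 ∧ Disjoint p.1 p.2 := by
      intro n hn
      obtain ⟨u, v, hu, hv, hxu, hyv, hd⟩ := t2_separation (hy n hn)
      exact ⟨(u, v), hu, hv, hxu, hyv, hd⟩
    choose! p hp1 hp2 hp3 hp4 hp5 using sep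
    set V : Set X := ⋂ n ∈ Finset.Ico 1 k, f^[n] ⁻¹' (p n).1 with hV
    set W : Set X := ⋂ n ∈ Finset.Ico 1 k, (p n).2 with hW
    have hVo : IsOpen V :=
      isOpen_biInter_finset fun n _ => (hp1 n ‹_›).preimage (hf.iterate n)
    have hWo : IsOpen W := isOpen_biInter_finset fun n hn => hp2 n hn
    have hxV : x ∈ V := by
      simp only [hV, Set.mem_iInter]
      intro n hn
      exact hp3 n hn
    have hyW : y ∈ W := by
      simp only [hW, Set.mem_iInter]
      intro n hn
      exact hp4 n hn
    obtain ⟨n, hn0, hnk, z, ⟨w, hwV, rfl⟩, hzW⟩ := h V W hVo hWo ⟨x, hxV⟩ ⟨y, hyW⟩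
    have hn : n ∈ Finset.Ico 1 k := Finset.mem_Ico.mpr ⟨hn0, hnk⟩
    have h1 : f^[n] w ∈ (p n).1 := by
      simp only [hV, Set.mem_iInter] at hwV
      exact hwV n hn
    have h2 : f^[n] w ∈ (p n).2 := by
      simp only [hW, Set.mem_iInter] at hzW
      exact hzW n hn
    exact (hp5 n hn).ne_of_mem h1 h2 rfl
  set s : Finset X := (Finset.Ico 1 k).image (fun n => f^[n] x) with hs
  have hmem : ∀ y : X, y ∈ s := by
    intro y
    obtain ⟨n, hn, hny⟩ := key y
    exact Finset.mem_image.mpr ⟨n, hn, hny⟩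
  have hfin : Finite X := by
    have : (Set.univ : Set X).Finite :=
      s.finite_toSet.subset fun y _ => hmem y
    exact Set.finite_univ_iff.mp this
  refine ⟨hfin, ?_⟩
  have : Fintype X := Fintype.ofFinite X
  have h1 : Nat.card X = Fintype.card X := Nat.card_eq_fintype_card
  have h2 : Fintype.card X ≤ s.card := by
    rw [← Finset.card_univ]
    exact Finset.card_le_card fun y _ => hmem y
  calc Nat.card X ≤ s.card := h1 ▸ h2
    _ ≤ (Finset.Ico 1 k).card := Finset.card_image_le
    _ = k - 1 := by simp
    _ ≤ k := Nat.sub_le k 1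
end

section
/- Let (X, f) be a dynamical system. Suppose there exists a positive integer k such that for all nonempty open sets V, W ⊆ X there is a positive integer n < k with f^n(V) ∩ W nonempty. Then X is finite and f is a cyclic permutation of X; that is, f is a bijection of X and the orbit of every point is all of X. -/
open Function Set

/-- uniformly bounded transitivity forces  to be finite and 
to be a cyclic permutation of X. -/
theorem cyclic_of_uniformly_bounded_transitivity
    {X : Type*} [TopologicalSpace X] [T2Space X]
    (f : X → X) (hf : Continuous f)
    (h : ∃ k : ℕ, 0 < k ∧ ∀ V W : Set X, IsOpen V → IsOpen W → V.Nonempty → W.Nonempty →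
      ∃ n : ℕ, 0 < n ∧ n < k ∧ (f^[n] '' V ∩ W).Nonempty) :
    Finite X ∧ Function.Bijective f ∧ ∀ x : X, (Set.range fun m : ℕ => f^[m] x) = Set.univ := by
  obtain ⟨k, hk, h⟩ := h
  -- Step A: every point is periodic with period < k
  have hper : ∀ x : X, ∃ p : ℕ, 0 < p ∧ p < k ∧ f^[p] x = x := by
    intro x
    by_contra hc
    push_neg at hc
    have sep : ∀ n : Fin k, ∃ UW : Set X × Set X, IsOpen UW.1 ∧ IsOpen UW.2 ∧ x ∈ UW.2 ∧
        f^[(n : ℕ)] x ∈ UW.1 ∧ (0 < (n : ℕ) → Disjoint UW.1 UW.2) := by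
      intro n
      rcases Nat.eq_zero_or_pos (n : ℕ) with h0 | h0
      · exact ⟨(Set.univ, Set.univ), isOpen_univ, isOpen_univ, trivial, trivial,
          fun hn => absurd h0 (by omega)⟩
      · obtain ⟨U, W, hU, hW, hfU, hxW, hd⟩ := t2_separation (hc (n : ℕ) h0 n.2)
        exact ⟨(U, W), hU, hW, hxW, hfU, fun _ => hd⟩
    choose UW hU hW hxW hfU hd using sep
    set V : Set X := ⋂ n : Fin k, ((UW n).2 ∩ (f^[(n : ℕ)])⁻¹' (UW n).1) with hVdef
    have hVopen : IsOpen V :=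
      isOpen_iInter_of_finite fun n => (hW n).inter ((hU n).preimage (hf.iterate _))
    have hxV : x ∈ V := Set.mem_iInter.2 fun n => ⟨hxW n, hfU n⟩
    obtain ⟨n, hn0, hnk, z, hz1, hz2⟩ := h V V hVopen hVopen ⟨x, hxV⟩ ⟨x, hxV⟩
    obtain ⟨w, hwV, rfl⟩ := hz1
    have h1 : f^[n] w ∈ (UW ⟨n, hnk⟩).1 := (Set.mem_iInter.1 hwV ⟨n, hnk⟩).2
    have h2 : f^[n] w ∈ (UW ⟨n, hnk⟩).2 := (Set.mem_iInter.1 hz2 ⟨n, hnk⟩).1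
    exact Set.disjoint_left.1 (hd ⟨n, hnk⟩ hn0) h1 h2
  -- Step B: every orbit is all of X
  have horb : ∀ x y : X, ∃ m : ℕ, f^[m] x = y := by
    intro x y
    by_contra hc
    push_neg at hc
    have sep : ∀ n : Fin k, ∃ AB : Set X × Set X, IsOpen AB.1 ∧ IsOpen AB.2 ∧
        f^[(n : ℕ)] x ∈ AB.1 ∧ y ∈ AB.2 ∧ Disjoint AB.1 AB.2 := by
      intro n
      obtain ⟨A, B, hA, hB, h1, h2, hd⟩ := t2_separation (hc (n : ℕ))
      exact ⟨(A, B), hA, hB, h1, h2, hd⟩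
    choose AB hA hB hfA hyB hd using sep
    set V : Set X := ⋂ n : Fin k, (f^[(n : ℕ)])⁻¹' (AB n).1 with hVdef
    set W : Set X := ⋂ n : Fin k, (AB n).2 with hWdef
    have hVopen : IsOpen V := isOpen_iInter_of_finite fun n => (hA n).preimage (hf.iterate _)
    have hWopen : IsOpen W := isOpen_iInter_of_finite fun n => hB n
    have hxV : x ∈ V := Set.mem_iInter.2 fun n => hfA n
    have hyW : y ∈ W := Set.mem_iInter.2 fun n => hyB n
    obtain ⟨n, hn0, hnk, z, hz1, hz2⟩ := h V W hVopen hWopen ⟨x, hxV⟩ ⟨y, hyW⟩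
    obtain ⟨w, hwV, rfl⟩ := hz1
    have h1 : f^[n] w ∈ (AB ⟨n, hnk⟩).1 := Set.mem_iInter.1 hwV ⟨n, hnk⟩
    have h2 : f^[n] w ∈ (AB ⟨n, hnk⟩).2 := Set.mem_iInter.1 hz2 ⟨n, hnk⟩
    exact Set.disjoint_left.1 (hd ⟨n, hnk⟩) h1 h2
  rcases isEmpty_or_nonempty X with hE | hNE
  · exact ⟨inferInstance, ⟨fun a => isEmptyElim a, fun b => isEmptyElim b⟩,
      fun x => isEmptyElim x⟩
  · obtain ⟨x⟩ := hNE
    obtain ⟨p, hp0, hpk, hpx⟩ := hper x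
    have hsurj : ∀ y, ∃ m, f^[m] x = y := horb x
    -- f^[p] is the identity
    have hfix : ∀ z : X, f^[p] z = z := by
      intro z
      obtain ⟨m, rfl⟩ := hsurj z
      rw [← Function.iterate_add_apply, add_comm, Function.iterate_add_apply, hpx]
    have hptfix : ∀ (t : ℕ) (z : X), f^[p * t] z = z := by
      intro t
      induction t with
      | zero => simp
      | succ t ih =>
        intro z
        rw [Nat.mul_succ, Function.iterate_add_apply, hfix, ih]
    have hmod : ∀ m : ℕ, f^[m] x = f^[m % p] x := by
      intro m
      conv_lhs => rw [← Nat.mod_add_div m p]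
      rw [Function.iterate_add_apply, hptfix]
    have hfin : Finite X := by
      rw [← Set.finite_univ_iff]
      have hsub : (Set.univ : Set X) ⊆ (fun i : Fin p => f^[(i : ℕ)] x) '' Set.univ := by
        intro y _
        obtain ⟨m, hm⟩ := hsurj y
        exact ⟨⟨m % p, Nat.mod_lt _ hp0⟩, trivial, by show f^[m % p] x = y; rw [← hmod]; exact hm⟩
      exact (Set.finite_univ.image _).subset hsub
    have hbij : Function.Bijective f := by
      refine Function.bijective_iff_has_inverse.2 ⟨f^[p - 1], fun z => ?_, fun z => ?_⟩
      · rw [← Function.iterate_succ_apply, Nat.succ_eq_add_one, Nat.sub_add_cancel hp0, hfix]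
      · rw [← Function.iterate_succ_apply' f (p - 1) z, Nat.succ_eq_add_one,
          Nat.sub_add_cancel hp0, hfix]
    exact ⟨hfin, hbij, fun z => Set.eq_univ_of_forall fun y => horb z y⟩
end

section
/- Let (X, f) be a dynamical system. Then there exists a positive integer k such that for all nonempty open sets V, W ⊆ X there is a positive integer n < k with f^n(V) ∩ W nonempty, if and only if X is finite, f is a bijection of X, and the orbit of every point equals X (i.e., (X, f) is a finite cycle). -/
open Function Set

private lemma iter_mod {X : Type*} (f : X → X) {L : ℕ} {v : X}
    (hfix : f^[L] v = v) (n : ℕ) : f^[n] v = f^[n % L] v := by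
  conv_lhs => rw [← Nat.mod_add_div n L]
  rw [Function.iterate_add_apply, Function.iterate_mul, Function.iterate_fixed hfix]

/-- uniformly bounded transitivity holds if and only if  is a
finite cycle. -/
theorem uniformly_bounded_transitivity_iff_finite_cycle
    {X : Type*} [TopologicalSpace X] [T2Space X]
    (f : X → X) (hf : Continuous f) :
    (∃ k : ℕ, 0 < k ∧ ∀ V W : Set X, IsOpen V → IsOpen W → V.Nonempty → W.Nonempty →
      ∃ n : ℕ, 0 < n ∧ n < k ∧ (f^[n] '' V ∩ W).Nonempty) ↔
    (Finite X ∧ Function.Bijective f ∧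
      ∀ x : X, (Set.range fun m : ℕ => f^[m] x) = Set.univ) := by
  constructor
  · rintro ⟨k, hk, H⟩
    -- Step 1: every point is periodic with period < k
    have lemA : ∀ x : X, ∃ n, 0 < n ∧ n < k ∧ f^[n] x = x := by
      intro x
      by_contra hx
      push_neg at hx
      have hsep : ∀ n : ℕ, ∃ u v : Set X, IsOpen u ∧ IsOpen v ∧ Disjoint u v ∧
          x ∈ v ∧ (0 < n → n < k → f^[n] x ∈ u) := by
        intro n
        by_cases hn : 0 < n ∧ n < k
        · obtain ⟨u, v, hu, hv, hmu, hmv, hd⟩ := t2_separation (hx n hn.1 hn.2)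
          exact ⟨u, v, hu, hv, hd, hmv, fun _ _ => hmu⟩
        · exact ⟨∅, univ, isOpen_empty, isOpen_univ, by simp, mem_univ x,
            fun h1 h2 => absurd ⟨h1, h2⟩ hn⟩
      choose u v hu hv hdis hxv hmem using hsep
      set V : Set X := ⋂ n ∈ Finset.Ico 1 k, (v n ∩ f^[n] ⁻¹' (u n)) with hV
      have hVopen : IsOpen V :=
        isOpen_biInter_finset fun n _ => (hv n).inter ((hu n).preimage (hf.iterate n))
      have hxV : x ∈ V := by
        simp only [hV, Set.mem_iInter, Finset.mem_Ico, Set.mem_inter_iff, Set.mem_preimage]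
        exact fun n hn => ⟨hxv n, hmem n hn.1 hn.2⟩
      obtain ⟨n, hn0, hnk, z, ⟨p, hpV, rfl⟩, hzV⟩ :=
        H V V hVopen hVopen ⟨x, hxV⟩ ⟨x, hxV⟩
      have hnmem : n ∈ Finset.Ico 1 k := Finset.mem_Ico.mpr ⟨hn0, hnk⟩
      have h1 : f^[n] p ∈ u n := (Set.mem_iInter₂.mp hpV n hnmem).2
      have h2 : f^[n] p ∈ v n := (Set.mem_iInter₂.mp hzV n hnmem).1
      exact Set.disjoint_left.mp (hdis n) h1 h2
    -- f is bijective
    have hinj : Function.Injective f := by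
      intro a b hab
      obtain ⟨na, hna0, _, hfa⟩ := lemA a
      obtain ⟨nb, hnb0, _, hfb⟩ := lemA b
      have hN : 0 < na * nb := Nat.mul_pos hna0 hnb0
      have ha : f^[na * nb] a = a := by
        rw [Function.iterate_mul]; exact Function.iterate_fixed hfa nb
      have hb : f^[na * nb] b = b := by
        rw [Nat.mul_comm, Function.iterate_mul]; exact Function.iterate_fixed hfb na
      obtain ⟨s, hs⟩ : ∃ s, na * nb = s + 1 := ⟨na * nb - 1, by omega⟩
      rw [hs] at ha hb
      calc a = f^[s + 1] a := ha.symm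
        _ = f^[s] (f a) := Function.iterate_succ_apply f s a
        _ = f^[s] (f b) := by rw [hab]
        _ = f^[s + 1] b := (Function.iterate_succ_apply f s b).symm
        _ = b := hb
    have hsurj : Function.Surjective f := by
      intro x
      obtain ⟨n, hn0, _, hfx⟩ := lemA x
      obtain ⟨s, hs⟩ : ∃ s, n = s + 1 := ⟨n - 1, by omega⟩
      exact ⟨f^[s] x, by rw [← Function.iterate_succ_apply' f s x]; rw [hs] at hfx; exact hfx⟩
    -- set up the global period L
    set L := (k - 1).factorial with hLdef
    have hL : 0 < L := Nat.factorial_pos _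
    have hfix : ∀ z : X, f^[L] z = z := by
      intro z
      obtain ⟨m, hm0, hmk, hfz⟩ := lemA z
      obtain ⟨t, ht⟩ : m ∣ L := Nat.dvd_factorial hm0 (by omega)
      rw [ht, Function.iterate_mul]
      exact Function.iterate_fixed hfz t
    -- Step 2: every point is in the orbit of every other point
    have lemB : ∀ x y : X, ∃ m : ℕ, f^[m] x = y := by
      intro x y
      by_contra hxy
      push_neg at hxy
      choose u w hu hw hmu hmw hdis using fun a : ℕ => t2_separation (hxy a)
      set V : Set X := ⋂ a ∈ Finset.range L, f^[a] ⁻¹' (u a) with hVdef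
      set W : Set X := ⋂ a ∈ Finset.range L, w a with hWdef
      have hVopen : IsOpen V :=
        isOpen_biInter_finset fun a _ => (hu a).preimage (hf.iterate a)
      have hWopen : IsOpen W := isOpen_biInter_finset fun a _ => hw a
      have hxV : x ∈ V := Set.mem_biInter fun a _ => hmu a
      have hyW : y ∈ W := Set.mem_biInter fun a _ => hmw a
      obtain ⟨n, hn0, hnk, z, ⟨p, hpV, rfl⟩, hzW⟩ :=
        H V W hVopen hWopen ⟨x, hxV⟩ ⟨y, hyW⟩
      have hmod : n % L < L := Nat.mod_lt _ hL
      have hamem : n % L ∈ Finset.range L := Finset.mem_range.mpr hmod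
      have h1 : f^[n] p ∈ u (n % L) := by
        rw [iter_mod f (hfix p) n]
        exact Set.mem_iInter₂.mp hpV _ hamem
      have h2 : f^[n] p ∈ w (n % L) := Set.mem_iInter₂.mp hzW _ hamem
      exact Set.disjoint_left.mp (hdis (n % L)) h1 h2
    -- conclude
    rcases isEmpty_or_nonempty X with hE | hNE
    · exact ⟨Finite.of_subsingleton, ⟨fun a => isEmptyElim a, fun a => isEmptyElim a⟩,
        fun x => isEmptyElim x⟩
    · have x₀ : X := Classical.arbitrary X
      have hfin : Finite X := by
        rw [← Set.finite_univ_iff]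
        refine Set.Finite.subset ((Set.finite_Iio L).image fun m => f^[m] x₀) ?_
        intro y _
        obtain ⟨m, hm⟩ := lemB x₀ y
        exact ⟨m % L, Nat.mod_lt _ hL, by show f^[m % L] x₀ = y; rw [← iter_mod f (hfix x₀) m]; exact hm⟩
      exact ⟨hfin, ⟨hinj, hsurj⟩, fun x => Set.eq_univ_of_forall fun y => lemB x y⟩
  · rintro ⟨hfin, hbij, horb⟩
    rcases isEmpty_or_nonempty X with hE | hNE
    · exact ⟨1, one_pos, fun V W _ _ hV _ => isEmptyElim hV.some⟩
    · -- f has finite order d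
      obtain ⟨i, j, hij, hfij⟩ :=
        Finite.exists_ne_map_eq_of_infinite (fun n : ℕ => (f^[n] : X → X))
      wlog hlt : i < j generalizing i j
      · exact this j i hij.symm hfij.symm (by omega)
      set d := j - i with hd
      have hd0 : 0 < d := by omega
      have hfix : ∀ z : X, f^[d] z = z := by
        intro z
        have : f^[i] (f^[d] z) = f^[i] z := by
          rw [← Function.iterate_add_apply, Nat.add_sub_cancel' (le_of_lt hlt), hfij]
        exact (hbij.1.iterate i) this
      refine ⟨d + 1, Nat.succ_pos d, fun V W _ _ hV hW => ?_⟩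
      obtain ⟨v, hv⟩ := hV
      obtain ⟨w, hw⟩ := hW
      have hwmem : w ∈ Set.range fun m : ℕ => f^[m] v := by rw [horb v]; trivial
      obtain ⟨m, hm'⟩ := hwmem
      have hm : f^[m] v = w := hm'
      by_cases h0 : m % d = 0
      · refine ⟨d, hd0, Nat.lt_succ_self d, f^[d] v, ⟨v, hv, rfl⟩, ?_⟩
        have : f^[m] v = v := by rw [iter_mod f (hfix v) m, h0, Function.iterate_zero_apply]
        rw [hfix v, ← this, hm]; exact hw
      · refine ⟨m % d, Nat.pos_of_ne_zero h0, (Nat.mod_lt _ hd0).trans (Nat.lt_succ_self d),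
          f^[m % d] v, ⟨v, hv, rfl⟩, ?_⟩
        rw [← iter_mod f (hfix v) m, hm]; exact hw
end

section
/- Let (X, f) be a dynamical system with f topologically transitive and the set P of periodic points dense in X. If (X, f) does not have DLP (i.e., there exists a positive integer n such that P \ P_n is not dense in X), then X is finite and f is a cyclic permutation of X; that is, f is a bijection of X and the orbit of every point equals X. -/
open Function Set

/-- a transitive map with dense periodic points which fails DLP is a
cyclic permutation of a finite space. -/
theorem finite_cycle_of_not_dlp
    {X : Type*} [TopologicalSpace X] [T2Space X]
    (f : X → X) (hf : Continuous f)
    (htrans : TopTransitive f)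
    (hP : Dense (PerPts f))
    (hnot : ∃ n : ℕ, 0 < n ∧ ¬ Dense (PerPts f \ PerPtsLe f n)) :
    Finite X ∧ Function.Bijective f ∧ ∀ x : X, (Set.range fun m : ℕ => f^[m] x) = Set.univ := by
  obtain ⟨n, hn, hnd⟩ := hnot
  set N := n.factorial with hNdef
  have hNpos : 0 < N := n.factorial_pos
  -- get a nonempty open set U disjoint from P \ P_n
  rw [dense_iff_inter_open] at hnd
  push_neg at hnd
  obtain ⟨U, hUopen, hUne, hUdisj⟩ := hnd
  -- every periodic point in U is fixed by f^[N]
  have hfixP : ∀ p ∈ PerPts f ∩ U, f^[N] p = p := by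
    rintro p ⟨hp, hpU⟩
    have hple : p ∈ PerPtsLe f n := by
      by_contra h
      have hmem : p ∈ U ∩ (PerPts f \ PerPtsLe f n) := ⟨hpU, hp, h⟩
      rw [hUdisj] at hmem
      exact hmem
    obtain ⟨m, hm0, hmn, hmp⟩ := hple
    obtain ⟨k, hk⟩ := Nat.dvd_factorial hm0 hmn
    rw [hNdef, hk, Function.iterate_mul]
    exact Function.iterate_fixed hmp k
  have hclosed : IsClosed {x | f^[N] x = x} := isClosed_eq (hf.iterate N) continuous_id
  -- U is contained in the fixed set of f^[N]
  have hUfix : U ⊆ {x | f^[N] x = x} := by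
    intro u hu
    have hcl : u ∈ closure (PerPts f ∩ U) := by
      rw [mem_closure_iff]
      intro O hO hOu
      obtain ⟨p, ⟨hpO, hpU⟩, hpP⟩ :=
        hP.inter_open_nonempty (O ∩ U) (hO.inter hUopen) ⟨u, hOu, hu⟩
      exact ⟨p, hpO, hpP, hpU⟩
    exact hclosed.closure_subset_iff.mpr (fun p hp => hfixP p hp) hcl
  -- the fixed set of f^[N] is dense, hence everything
  have hfixall : ∀ x, f^[N] x = x := by
    have hdense : Dense {x | f^[N] x = x} := by
      rw [dense_iff_inter_open]
      intro W hW hWne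
      obtain ⟨m, hm, z, ⟨u, hu, rfl⟩, hzW⟩ := htrans U W hUopen hW hUne hWne
      refine ⟨f^[m] u, hzW, ?_⟩
      show f^[N] (f^[m] u) = f^[m] u
      rw [← Function.iterate_add_apply, Nat.add_comm, Function.iterate_add_apply, hUfix hu]
    intro x
    have h1 : closure {x | f^[N] x = x} = univ := hdense.closure_eq
    have h2 : ({x | f^[N] x = x} : Set X) = univ := by rw [← hclosed.closure_eq, h1]
    exact (h2.symm ▸ mem_univ x : x ∈ {x | f^[N] x = x})
  have hNsucc : N - 1 + 1 = N := Nat.succ_pred_eq_of_pos hNpos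
  -- bijectivity
  have hbij : Function.Bijective f := by
    constructor
    · intro a b hab
      have ha := hfixall a
      have hb := hfixall b
      rw [← hNsucc, Function.iterate_succ_apply] at ha hb
      rw [← ha, ← hb, hab]
    · intro b
      have hb := hfixall b
      rw [← hNsucc, Function.iterate_succ_apply'] at hb
      exact ⟨f^[N - 1] b, hb⟩
  -- reduction of iterates mod N
  have hmod : ∀ (m : ℕ) (z : X), f^[m] z = f^[m % N] z := by
    have hid : f^[N] = id := funext hfixall
    intro m z
    conv_lhs => rw [← Nat.mod_add_div m N]
    rw [Function.iterate_add_apply, Function.iterate_mul, hid, Function.iterate_id]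
    rfl
  -- the orbit of every point is everything
  have horb : ∀ x : X, (Set.range fun m : ℕ => f^[m] x) = Set.univ := by
    intro x
    by_contra hne
    obtain ⟨y, hy⟩ : ∃ y : X, y ∉ Set.range fun m : ℕ => f^[m] x := by
      by_contra h
      push_neg at h
      exact hne (eq_univ_of_forall h)
    set Ox := Set.range fun m : ℕ => f^[m] x with hOx
    set Oy := Set.range fun m : ℕ => f^[m] y with hOy
    -- both orbits are finite
    have hfin : ∀ z : X, ((Set.range fun m : ℕ => f^[m] z)).Finite := by
      intro z
      apply Set.Finite.subset (Set.Finite.image (fun m => f^[m] z) (Set.finite_Iio N))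
      rintro _ ⟨m, rfl⟩
      exact ⟨m % N, Nat.mod_lt m hNpos, (hmod m z).symm⟩
    -- the two orbits are disjoint
    have hdisj : Disjoint Ox Oy := by
      rw [Set.disjoint_left]
      rintro z ⟨a, rfl⟩ ⟨b, hb⟩
      apply hy
      have hbN : f^[b % N] y = f^[a] x := by rw [← hmod b y]; exact hb
      have hrlt : b % N < N := Nat.mod_lt b hNpos
      have : f^[N - b % N] (f^[b % N] y) = y := by
        rw [← Function.iterate_add_apply, Nat.sub_add_cancel hrlt.le]
        exact hfixall y
      rw [hbN, ← Function.iterate_add_apply] at this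
      exact ⟨N - b % N + a, this⟩
    -- separate the orbits by disjoint open sets
    obtain ⟨A, B, hAopen, hBopen, hOxA, hOyB, hAB⟩ :=
      SeparatedNhds.of_isCompact_isCompact ((hfin x).isCompact) ((hfin y).isCompact) hdisj
    -- invariant open neighborhoods
    set U' : Set X := ⋂ k : Fin N, f^[(k : ℕ)] ⁻¹' A with hU'
    set V' : Set X := ⋂ k : Fin N, f^[(k : ℕ)] ⁻¹' B with hV'
    have hU'open : IsOpen U' := isOpen_iInter_of_finite fun k => (hf.iterate _).isOpen_preimage A hAopen
    have hV'open : IsOpen V' := isOpen_iInter_of_finite fun k => (hf.iterate _).isOpen_preimage B hBopen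
    have hxU' : x ∈ U' := Set.mem_iInter.mpr fun k => hOxA ⟨(k : ℕ), rfl⟩
    have hyV' : y ∈ V' := Set.mem_iInter.mpr fun k => hOyB ⟨(k : ℕ), rfl⟩
    obtain ⟨m, hm, w, ⟨u, hu, rfl⟩, hwV'⟩ :=
      htrans U' V' hU'open hV'open ⟨x, hxU'⟩ ⟨y, hyV'⟩
    have hwA : f^[m] u ∈ A := by
      rw [hmod m u]
      exact Set.mem_iInter.mp hu ⟨m % N, Nat.mod_lt m hNpos⟩
    have hwB : f^[m] u ∈ B := by
      have := Set.mem_iInter.mp hwV' ⟨0, hNpos⟩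
      simpa using this
    exact Set.disjoint_left.mp hAB hwA hwB
  refine ⟨?_, hbij, horb⟩
  -- finiteness
  cases isEmpty_or_nonempty X with
  | inl h => exact Finite.of_subsingleton
  | inr h =>
    obtain ⟨x⟩ := h
    have : (Set.univ : Set X).Finite := by
      rw [← horb x]
      apply Set.Finite.subset (Set.Finite.image (fun m => f^[m] x) (Set.finite_Iio N))
      rintro _ ⟨m, rfl⟩
      exact ⟨m % N, Nat.mod_lt m hNpos, (hmod m x).symm⟩
    exact Set.finite_univ_iff.mp this
end

section
/- Let (X, f) be a dynamical system with f topologically transitive. Let {F_n} (n = 1, 2, ...) be a sequence of closed invariant subsets of X, each a proper subset of X, whose union ∪_{n≥1} F_n is dense in X. Then for every positive integer k, the set (∪_{n≥1} F_n) \ (F_1 ∪ ... ∪ F_k) is dense in X. -/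
open Function Set

section NowhereDense

variable {X : Type*} [TopologicalSpace X]

lemma IsNowhereDense.union {s t : Set X} (hs : IsNowhereDense s) (ht : IsNowhereDense t) :
    IsNowhereDense (s ∪ t) := by
  rw [IsNowhereDense, closure_union,
    interior_union_isClosed_of_interior_empty isClosed_closure ht]
  exact hs

lemma isNowhereDense_biUnion_finset {ι : Type*} {s : Finset ι} {A : ι → Set X}
    (h : ∀ i ∈ s, IsNowhereDense (A i)) : IsNowhereDense (⋃ i ∈ s, A i) := by
  classical
  induction s using Finset.induction with
  | empty => simp
  | insert a s _ ih =>
    rw [Finset.set_biUnion_insert]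
    exact (h a (Finset.mem_insert_self a s)).union
      (ih fun i hi => h i (Finset.mem_insert_of_mem hi))

lemma Dense.diff_of_isNowhereDense {s t : Set X} (hs : Dense s) (ht : IsNowhereDense t) :
    Dense (s \ t) :=
  (hs.inter_of_isOpen_right (interior_eq_empty_iff_dense_compl.1 ht)
    isClosed_closure.isOpen_compl).mono
    fun _ hx => ⟨hx.1, fun hxt => hx.2 (subset_closure hxt)⟩

end NowhereDense

/-- Some iterate carries the interior of `F` into the nonempty open set `Fᶜ`, which invariance
forbids. -/
lemma TopTransitive.isNowhereDense_of_mapsTo {X : Type*} [TopologicalSpace X] {f : X → X}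
    (htrans : TopTransitive f) {F : Set X} (hF : IsClosed F) (hmaps : MapsTo f F F)
    (hne : F ≠ univ) : IsNowhereDense F := by
  rw [hF.isNowhereDense_iff, ← not_nonempty_iff_eq_empty]
  intro hint
  obtain ⟨n, -, _, ⟨y, hy, rfl⟩, hyF⟩ :=
    htrans _ _ isOpen_interior hF.isOpen_compl hint (nonempty_compl.2 hne)
  exact hyF (hmaps.iterate n (interior_subset hy))

theorem dense_diff_of_closed_invariant_union_general
    {X : Type*} [TopologicalSpace X]
    (f : X → X)
    (htrans : TopTransitive f)
    (F : ℕ → Set X)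
    (hclosed : ∀ n : ℕ, 1 ≤ n → IsClosed (F n))
    (hinv : ∀ n : ℕ, 1 ≤ n → f '' F n ⊆ F n)
    (hproper : ∀ n : ℕ, 1 ≤ n → F n ≠ Set.univ)
    (hdense : Dense (⋃ n ≥ 1, F n)) :
    ∀ k : ℕ, 1 ≤ k → Dense ((⋃ n ≥ 1, F n) \ (⋃ n ∈ Finset.Icc 1 k, F n)) := by
  intro k _
  refine hdense.diff_of_isNowhereDense (isNowhereDense_biUnion_finset fun n hn => ?_)
  have hn : 1 ≤ n := (Finset.mem_Icc.1 hn).1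
  exact htrans.isNowhereDense_of_mapsTo (hclosed n hn) (mapsTo_iff_image_subset.2 (hinv n hn))
    (hproper n hn)

/-- in a transitive system, if closed proper invariant sets `F n`
have dense union, then the union stays dense after removing finitely many of them. -/
theorem dense_diff_of_closed_invariant_union
    {X : Type*} [TopologicalSpace X] [T2Space X]
    (f : X → X) (hf : Continuous f)
    (htrans : TopTransitive f)
    (F : ℕ → Set X)
    (hclosed : ∀ n : ℕ, 1 ≤ n → IsClosed (F n))
    (hinv : ∀ n : ℕ, 1 ≤ n → f '' F n ⊆ F n)
    (hproper : ∀ n : ℕ, 1 ≤ n → F n ≠ Set.univ)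
    (hdense : Dense (⋃ n ≥ 1, F n)) :
    ∀ k : ℕ, 1 ≤ k → Dense ((⋃ n ≥ 1, F n) \ (⋃ n ∈ Finset.Icc 1 k, F n)) :=
  dense_diff_of_closed_invariant_union_general f htrans F hclosed hinv hproper hdense
end

section
/- Let (X, f) be a dynamical system with X infinite and f topologically transitive. If the set of eventually periodic points of f is dense in X, then for every positive integer n, the set of eventually periodic points whose orbit has at least n elements is also dense in X. -/
open Function Set

/-- If two iterates of `x` below `n` coincide, every iterate of `x` equals an
iterate of index less than `n`. -/
lemma small_orbit_aux {X : Type*} (f : X → X) {x : X} {n i j : ℕ} (hij : i < j) (hjn : j < n)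
    (h : f^[i] x = f^[j] x) : ∀ m : ℕ, ∃ k, k < n ∧ f^[m] x = f^[k] x := by
  intro m
  induction m using Nat.strong_induction_on with
  | _ m ih =>
    by_cases hm : m < n
    · exact ⟨m, hm, rfl⟩
    · push_neg at hm
      have hjm : j ≤ m := le_trans (le_of_lt hjn) hm
      have key : f^[m] x = f^[m - j + i] x := by
        have h1 : f^[m] x = f^[m - j] (f^[j] x) := by
          rw [← Function.iterate_add_apply, Nat.sub_add_cancel hjm]
        rw [h1, ← h, ← Function.iterate_add_apply]
      have hlt : m - j + i < m := by omega
      obtain ⟨k, hk, hke⟩ := ih _ hlt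
      exact ⟨k, hk, key.trans hke⟩

/-- in an infinite transitive system with dense eventually periodic
points, the eventually periodic points with orbit of at least `n` elements are dense. -/
theorem dense_eventually_periodic_large_orbit
    {X : Type*} [TopologicalSpace X] [T2Space X] [Infinite X]
    (f : X → X) (hf : Continuous f)
    (htrans : TopTransitive f)
    (hEP : Dense {x : X | ∃ m : ℕ, ∃ k : ℕ, 0 < k ∧ f^[k] (f^[m] x) = f^[m] x}) :
    ∀ n : ℕ, 0 < n →
      Dense {x : X | (∃ m : ℕ, ∃ k : ℕ, 0 < k ∧ f^[k] (f^[m] x) = f^[m] x) ∧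
        ∃ t : Finset X, ↑t ⊆ (Set.range fun j : ℕ => f^[j] x) ∧ n ≤ t.card} := by
  classical
  intro n hn
  set EP : Set X := {x : X | ∃ m : ℕ, ∃ k : ℕ, 0 < k ∧ f^[k] (f^[m] x) = f^[m] x} with hEPdef
  set G : Set X := {x : X | (∃ m : ℕ, ∃ k : ℕ, 0 < k ∧ f^[k] (f^[m] x) = f^[m] x) ∧
        ∃ t : Finset X, ↑t ⊆ (Set.range fun j : ℕ => f^[j] x) ∧ n ≤ t.card} with hGdef
  by_contra hden
  rw [dense_iff_inter_open] at hden
  push_neg at hden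
  obtain ⟨U, hUopen, hUne, hUG⟩ := hden
  -- the closed set of points whose first `n` iterates are not pairwise distinct
  set S : Set X := ⋃ i ∈ Finset.range n, ⋃ j ∈ Finset.range n,
    {x : X | i < j ∧ f^[i] x = f^[j] x} with hSdef
  have hSclosed : IsClosed S := by
    apply isClosed_biUnion_finset
    intro i _
    apply isClosed_biUnion_finset
    intro j _
    by_cases hij : i < j
    · have : {x : X | i < j ∧ f^[i] x = f^[j] x} = {x : X | f^[i] x = f^[j] x} := by
        ext x; simp [hij]
      rw [this]
      exact isClosed_eq (hf.iterate i) (hf.iterate j)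
    · have : {x : X | i < j ∧ f^[i] x = f^[j] x} = ∅ := by
        ext x; simp [hij]
      rw [this]; exact isClosed_empty
  have hmemS : ∀ x : X, x ∈ S ↔ ∃ i j : ℕ, i < j ∧ j < n ∧ f^[i] x = f^[j] x := by
    intro x
    simp only [hSdef, Set.mem_iUnion, Finset.mem_range, Set.mem_setOf_eq]
    constructor
    · rintro ⟨i, hi, j, hj, hij, he⟩; exact ⟨i, j, hij, hj, he⟩
    · rintro ⟨i, j, hij, hj, he⟩; exact ⟨i, lt_trans hij hj, j, hj, hij, he⟩
  -- EP points of U lie in S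
  have hEPS : EP ∩ U ⊆ S := by
    rintro x ⟨hxEP, hxU⟩
    by_contra hxS
    rw [hmemS] at hxS
    push_neg at hxS
    have hinj : Set.InjOn (fun k : ℕ => f^[k] x) (Finset.range n : Set ℕ) := by
      intro a ha b hb hab
      simp only [Finset.coe_range, Set.mem_Iio] at ha hb
      by_contra hne
      rcases lt_or_gt_of_ne hne with h | h
      · exact (hxS a b h hb) hab
      · exact (hxS b a h ha) hab.symm
    have hxG : x ∈ G := by
      refine ⟨hxEP, (Finset.range n).image (fun k : ℕ => f^[k] x), ?_, ?_⟩
      · intro z hz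
        simp only [Finset.coe_image, Finset.coe_range, Set.mem_image, Set.mem_Iio] at hz
        obtain ⟨k, _, hk⟩ := hz
        exact ⟨k, hk⟩
      · rw [Finset.card_image_of_injOn hinj, Finset.card_range]
    have : x ∈ U ∩ G := ⟨hxU, hxG⟩
    rw [hUG] at this
    exact this
  -- hence U ⊆ S
  have hUS : U ⊆ S := by
    intro x hxU
    have hx : x ∈ closure (EP ∩ U) := by
      rw [mem_closure_iff]
      intro O hO hxO
      obtain ⟨z, hz⟩ := hEP.inter_open_nonempty (O ∩ U) (hO.inter hUopen) ⟨x, hxO, hxU⟩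
      exact ⟨z, hz.1.1, hz.2, hz.1.2⟩
    have : x ∈ closure S := closure_mono hEPS hx
    rwa [hSclosed.closure_eq] at this
  -- pick a base point and a point off its orbit
  obtain ⟨u, huU⟩ := hUne
  obtain ⟨y, hy⟩ := Finset.exists_notMem ((Finset.range n).image (fun k : ℕ => f^[k] u))
  have hyk : ∀ k, k < n → f^[k] u ≠ y := by
    intro k hk he
    exact hy (Finset.mem_image.2 ⟨k, Finset.mem_range.2 hk, he⟩)
  -- separating open sets
  have key : ∀ k : ℕ, ∃ A B : Set X, IsOpen A ∧ IsOpen B ∧ f^[k] u ∈ A ∧ y ∈ B ∧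
      (k < n → Disjoint A B) := by
    intro k
    by_cases hk : k < n
    · obtain ⟨A, B, hA, hB, hmA, hmB, hd⟩ := t2_separation (hyk k hk)
      exact ⟨A, B, hA, hB, hmA, hmB, fun _ => hd⟩
    · exact ⟨Set.univ, Set.univ, isOpen_univ, isOpen_univ, trivial, trivial,
        fun h => absurd h hk⟩
  choose A B hA hB hmA hmB hdis using key
  set U' : Set X := U ∩ ⋂ k ∈ Finset.range n, (f^[k]) ⁻¹' (A k) with hU'def
  set W : Set X := ⋂ k ∈ Finset.range n, B k with hWdef
  have hU'open : IsOpen U' := by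
    apply hUopen.inter
    apply isOpen_biInter_finset
    intro k _
    exact (hA k).preimage (hf.iterate k)
  have hWopen : IsOpen W := by
    apply isOpen_biInter_finset
    intro k _
    exact hB k
  have hU'ne : U'.Nonempty := by
    refine ⟨u, huU, ?_⟩
    simp only [Set.mem_iInter, Set.mem_preimage, Finset.mem_range]
    intro k _
    exact hmA k
  have hWne : W.Nonempty := by
    refine ⟨y, ?_⟩
    simp only [hWdef, Set.mem_iInter, Finset.mem_range]
    intro k _
    exact hmB k
  obtain ⟨m, _, z, ⟨u', hu'U', hz⟩, hzW⟩ := htrans U' W hU'open hWopen hU'ne hWne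
  have hu'U : u' ∈ U := hu'U'.1
  obtain ⟨i, j, hij, hjn, he⟩ := (hmemS u').1 (hUS hu'U)
  obtain ⟨k, hkn, hke⟩ := small_orbit_aux f hij hjn he m
  -- f^[k] u' ∈ W and f^[k] u' ∈ A k, contradiction with disjointness
  have h1 : f^[k] u' ∈ W := by
    rw [← hke, hz]; exact hzW
  have h2 : f^[k] u' ∈ A k := by
    have := hu'U'.2
    simp only [Set.mem_iInter, Set.mem_preimage, Finset.mem_range] at this
    exact this k hkn
  have h3 : f^[k] u' ∈ B k := by
    simp only [hWdef, Set.mem_iInter, Finset.mem_range] at h1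
    exact h1 k hkn
  exact (hdis k hkn).ne_of_mem h2 h3 rfl
end

section
/- Let (X, f) be a dynamical system with X infinite and f topologically transitive, and let n be a positive integer. If every nonempty open subset of X contains a point whose orbit is finite, then every nonempty open subset of X contains a point whose orbit is finite and has at least n elements. -/
open Function Set

/-- Auxiliary: by repeated use of transitivity, inside any nonempty open `V`
there is a nonempty open `W` all of whose points visit each `U i`. -/
lemma visit_all {X : Type*} [TopologicalSpace X]
    (f : X → X) (hf : Continuous f) (htrans : TopTransitive f) :
    ∀ (k : ℕ) (U : Fin k → Set X), (∀ i, IsOpen (U i)) → (∀ i, (U i).Nonempty) →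
    ∀ V : Set X, IsOpen V → V.Nonempty →
      ∃ W : Set X, IsOpen W ∧ W.Nonempty ∧ W ⊆ V ∧
        ∃ m : Fin k → ℕ, ∀ x ∈ W, ∀ i, f^[m i] x ∈ U i := by
  intro k
  induction k with
  | zero =>
    intro U _ _ V hV hVne
    exact ⟨V, hV, hVne, subset_rfl, fun i => 0, fun x _ i => i.elim0⟩
  | succ k ih =>
    intro U hUo hUne V hV hVne
    obtain ⟨W, hWo, hWne, hWV, m, hm⟩ :=
      ih (fun i => U i.castSucc) (fun i => hUo _) (fun i => hUne _) V hV hVne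
    obtain ⟨p, hp, y, hy⟩ := htrans W (U (Fin.last k)) hWo (hUo _) hWne (hUne _)
    obtain ⟨⟨x, hxW, hxy⟩, hyU⟩ := hy
    refine ⟨W ∩ f^[p] ⁻¹' (U (Fin.last k)),
      hWo.inter ((hUo _).preimage (hf.iterate p)),
      ⟨x, hxW, by simp [Set.mem_preimage, hxy, hyU]⟩,
      fun z hz => hWV hz.1, Fin.snoc m p, ?_⟩
    intro z hz i
    refine Fin.lastCases ?_ ?_ i
    · simpa using hz.2
    · intro j
      simpa using hm z hz.1 j

/-- in an infinite transitive system, if every nonempty open set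
contains a point with finite orbit, then every nonempty open set contains a point
whose orbit is finite with at least `n` elements. -/
theorem finite_orbit_of_size_ge
    {X : Type*} [TopologicalSpace X] [T2Space X] [Infinite X]
    (f : X → X) (hf : Continuous f)
    (htrans : TopTransitive f)
    (n : ℕ) (hn : 0 < n)
    (hfin : ∀ V : Set X, IsOpen V → V.Nonempty →
      ∃ x ∈ V, (Set.range fun j : ℕ => f^[j] x).Finite) :
    ∀ V : Set X, IsOpen V → V.Nonempty →
      ∃ x ∈ V, (Set.range fun j : ℕ => f^[j] x).Finite ∧
        n ≤ (Set.range fun j : ℕ => f^[j] x).ncard := by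
  intro V hV hVne
  -- pick n distinct points and separate them by disjoint opens
  set e := Infinite.natEmbedding X
  have hinj : Function.Injective (fun i : Fin n => e i) := fun a b h => by
    have := e.injective h
    exact Fin.ext (Nat.cast_injective this)
  set s : Set X := Set.range (fun i : Fin n => e i) with hs
  have hsfin : s.Finite := Set.finite_range _
  obtain ⟨U, hU, hsep⟩ := hsfin.t2_separation
  -- find an open W ⊆ V whose points visit every U (e i)
  obtain ⟨W, hWo, hWne, hWV, m, hm⟩ :=
    visit_all f hf htrans n (fun i => U (e i))
      (fun i => (hU _).2) (fun i => ⟨e i, (hU _).1⟩) V hV hVne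
  obtain ⟨x, hxW, hxfin⟩ := hfin W hWo hWne
  refine ⟨x, hWV hxW, hxfin, ?_⟩
  -- the points f^[m i] x are pairwise distinct
  have hg : Function.Injective (fun i : Fin n => f^[m i] x) := by
    intro i j hij
    by_contra hne
    have hij' : (e i : X) ≠ e j := fun h => hne (hinj h)
    have hd := hsep (Set.mem_range_self i) (Set.mem_range_self j) hij'
    have h1 : f^[m i] x ∈ U (e i) := hm x hxW i
    have h2 : f^[m i] x ∈ U (e j) := by
      have := hm x hxW j
      rw [show f^[m j] x = f^[m i] x from hij.symm] at this
      exact this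
    exact (Set.disjoint_left.mp hd h1) h2
  have key : (Set.range fun i : Fin n => f^[m i] x).ncard = n := by
    rw [show (Set.range fun i : Fin n => f^[m i] x) =
        (fun i : Fin n => f^[m i] x) '' Set.univ by rw [Set.image_univ],
      Set.ncard_image_of_injective _ hg, Set.ncard_univ, Nat.card_eq_fintype_card,
      Fintype.card_fin]
  rw [← key]
  apply Set.ncard_le_ncard _ hxfin
  rintro y ⟨i, rfl⟩
  exact ⟨m i, rfl⟩
end

section
/- Let (X, f) be a dynamical system with f topologically transitive and the set P of periodic points dense in X. Then either f^n equals the identity map for some positive integer n, or P \ P_n is dense in X for every positive integer n. -/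
open Function Set

/-- for a transitive map with dense periodic points, either some
iterate of `f` is the identity, or `P \ P_n` is dense for every `n`. -/
theorem iterate_id_or_dlp
    {X : Type*} [TopologicalSpace X] [T2Space X]
    (f : X → X) (hf : Continuous f)
    (htrans : TopTransitive f)
    (hP : Dense (PerPts f)) :
    (∃ n : ℕ, 0 < n ∧ f^[n] = id) ∨
    (∀ n : ℕ, 0 < n → Dense (PerPts f \ PerPtsLe f n)) := by
  by_cases hdense : ∀ n : ℕ, 0 < n → Dense (PerPts f \ PerPtsLe f n)
  · exact Or.inr hdense
  left
  push_neg at hdense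
  obtain ⟨n, hn, hnd⟩ := hdense
  -- get an open set U avoiding P \ P_n
  rw [dense_iff_inter_open] at hnd
  push_neg at hnd
  obtain ⟨U, hUo, hUne, hU⟩ := hnd
  -- P_n is dense
  have hPn : Dense (PerPtsLe f n) := by
    rw [dense_iff_inter_open]
    intro W hWo hWne
    obtain ⟨m, hm, z, hz⟩ := htrans W U hWo hUo hWne hUne
    obtain ⟨⟨p, hpW, hpz⟩, hzU⟩ := hz
    -- V := W ∩ f^[m]⁻¹ U is open nonempty; pick periodic point in it
    have hVo : IsOpen (W ∩ f^[m] ⁻¹' U) := hWo.inter (hUo.preimage (hf.iterate m))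
    have hVne : (W ∩ f^[m] ⁻¹' U).Nonempty := ⟨p, hpW, by simpa [hpz] using hzU⟩
    obtain ⟨q, ⟨hqW, hqU⟩, hqP⟩ := hP.inter_open_nonempty _ hVo hVne
    obtain ⟨d, hd, hqd⟩ := hqP
    -- f^[m] q is periodic, lies in U, hence in P_n
    have himgP : f^[m] q ∈ PerPts f := by
      refine ⟨d, hd, ?_⟩
      rw [← Function.iterate_add_apply, Nat.add_comm, Function.iterate_add_apply, hqd]
    have : f^[m] q ∈ PerPtsLe f n := by
      by_contra hcon
      have : f^[m] q ∈ U ∩ (PerPts f \ PerPtsLe f n) := ⟨hqU, himgP, hcon⟩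
      rw [hU] at this
      exact this
    obtain ⟨k, hk, hkn, hkfix⟩ := this
    -- then q itself is in P_n
    refine ⟨q, hqW, k, hk, hkn, ?_⟩
    have hmd : f^[m * d] q = q := by
      rw [Nat.mul_comm, Function.iterate_mul, Function.iterate_fixed hqd]
    have hle : m ≤ m * d := Nat.le_mul_of_pos_right m hd
    calc f^[k] q = f^[k] (f^[m * d] q) := by rw [hmd]
      _ = f^[m * d - m] (f^[k] (f^[m] q)) := by
          rw [← Function.iterate_add_apply, ← Function.iterate_add_apply,
            ← Function.iterate_add_apply]
          congr 1
          omega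
      _ = f^[m * d - m] (f^[m] q) := by rw [hkfix]
      _ = f^[m * d] q := by
          rw [← Function.iterate_add_apply]
          congr 1
          omega
      _ = q := hmd
  -- P_n ⊆ Fix f^[n!], which is closed, hence f^[n!] = id
  refine ⟨n.factorial, n.factorial_pos, ?_⟩
  have hclosed : IsClosed {x : X | f^[n.factorial] x = x} :=
    isClosed_eq (hf.iterate _) continuous_id
  have hsub : PerPtsLe f n ⊆ {x : X | f^[n.factorial] x = x} := by
    rintro x ⟨m, hm, hmn, hfix⟩
    obtain ⟨c, hc⟩ := Nat.dvd_factorial hm hmn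
    show f^[n.factorial] x = x
    rw [hc, Function.iterate_mul, Function.iterate_fixed hfix]
  have : Dense {x : X | f^[n.factorial] x = x} := hPn.mono hsub
  have huniv : {x : X | f^[n.factorial] x = x} = Set.univ := by
    rw [← hclosed.closure_eq, this.closure_eq]
  funext x
  have : x ∈ {x : X | f^[n.factorial] x = x} := huniv ▸ Set.mem_univ x
  exact this
end

section
/- Let I be a nondegenerate interval in the real line (possibly I = ℝ) and let f : I → I be a continuous topologically transitive map. Then the set P of periodic points of f is dense in I and has empty interior in I; consequently, P \ P_n is dense in I for every positive integer n. -/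
open Function Set Topology

namespace ITDP

variable {I : Set ℝ}

/-- Open "window" in the subtype. -/
def win (I : Set ℝ) (a b : ℝ) : Set ↥I := {x : ↥I | a < (x : ℝ) ∧ (x : ℝ) < b}

lemma isOpen_win (a b : ℝ) : IsOpen (win I a b) :=
  (isOpen_lt continuous_const continuous_subtype_val).inter
    (isOpen_lt continuous_subtype_val continuous_const)

lemma exists_mem_win (hI : I.OrdConnected) {u v : ↥I} (h : (u : ℝ) < v) :
    ∃ w : ↥I, w ∈ win I u v := by
  obtain ⟨r, h1, h2⟩ := exists_between h
  exact ⟨⟨r, hI.out u.2 v.2 ⟨h1.le, h2.le⟩⟩, h1, h2⟩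

lemma between_mem_of_preconn {S : Set ↥I} (hS : IsPreconnected S) {u v y : ↥I}
    (hu : u ∈ S) (hv : v ∈ S) (h1 : u ≤ y) (h2 : y ≤ v) : y ∈ S := by
  have himg : IsPreconnected (Subtype.val '' S) :=
    hS.image _ continuous_subtype_val.continuousOn
  have hoc := himg.ordConnected
  have hmem : (y : ℝ) ∈ Subtype.val '' S :=
    hoc.out ⟨u, hu, rfl⟩ ⟨v, hv, rfl⟩ ⟨h1, h2⟩
  obtain ⟨z, hz, hzy⟩ := hmem
  exact (Subtype.ext hzy : z = y) ▸ hz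

lemma preconn_of_between (hI : I.OrdConnected) {S : Set ↥I}
    (h : ∀ u ∈ S, ∀ v ∈ S, ∀ y : ↥I, u ≤ y → y ≤ v → y ∈ S) : IsPreconnected S := by
  rw [← IsInducing.subtypeVal.isPreconnected_image, isPreconnected_iff_ordConnected]
  constructor
  rintro r ⟨u, hu, rfl⟩ s ⟨v, hv, rfl⟩ z hz
  have hzI : z ∈ I := hI.out u.2 v.2 hz
  exact ⟨⟨z, hzI⟩, h u hu v hv ⟨z, hzI⟩ hz.1 hz.2, rfl⟩

lemma isPreconnected_Icc' (hI : I.OrdConnected) (a b : ↥I) :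
    IsPreconnected (Icc a b) :=
  preconn_of_between hI fun u hu v hv y h1 h2 => ⟨hu.1.trans h1, h2.trans hv.2⟩

lemma exists_near_ne_aux (hI : I.OrdConnected) {a b : ℝ} (ha : a ∈ I) (hb : b ∈ I)
    (hab : a < b) (x : ↥I) {ε : ℝ} (hε : 0 < ε) :
    ∃ y : ↥I, y ≠ x ∧ |(y : ℝ) - x| < ε := by
  by_cases hx : (x : ℝ) < b
  · obtain ⟨r, hr1, hr2⟩ := exists_between (lt_min hx (lt_add_of_pos_right (x : ℝ) hε))
    have hrI : r ∈ I := hI.out x.2 hb ⟨hr1.le, (hr2.trans_le (min_le_left _ _)).le⟩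
    refine ⟨⟨r, hrI⟩, fun hEq => absurd (congrArg Subtype.val hEq) (by simpa using hr1.ne'), ?_⟩
    have h2 : r < (x : ℝ) + ε := hr2.trans_le (min_le_right _ _)
    rw [abs_lt]; constructor <;> simp only [] <;> linarith
  · push_neg at hx
    have hax : a < (x : ℝ) := hab.trans_le hx
    obtain ⟨r, hr1, hr2⟩ := exists_between (max_lt hax (sub_lt_self (x : ℝ) hε))
    have hrI : r ∈ I := hI.out ha x.2 ⟨(le_max_left _ _).trans hr1.le, hr2.le⟩
    refine ⟨⟨r, hrI⟩, fun hEq => absurd (congrArg Subtype.val hEq) (by simpa using hr2.ne), ?_⟩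
    have h2 : (x : ℝ) - ε < r := (le_max_right _ _).trans_lt hr1
    rw [abs_lt]; constructor <;> simp only [] <;> linarith

lemma exists_near_ne (hI : I.OrdConnected) (hnd : ∃ a b : ℝ, a ∈ I ∧ b ∈ I ∧ a ≠ b)
    (x : ↥I) {ε : ℝ} (hε : 0 < ε) :
    ∃ y : ↥I, y ≠ x ∧ |(y : ℝ) - x| < ε := by
  obtain ⟨a, b, ha, hb, hab⟩ := hnd
  rcases hab.lt_or_gt with h | h
  · exact exists_near_ne_aux hI ha hb h x hε
  · exact exists_near_ne_aux hI hb ha h x hε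

lemma isOpen_infinite (hI : I.OrdConnected) (hnd : ∃ a b : ℝ, a ∈ I ∧ b ∈ I ∧ a ≠ b)
    {O : Set ↥I} (hO : IsOpen O) (hne : O.Nonempty) : O.Infinite := by
  classical
  obtain ⟨x, hx⟩ := hne
  obtain ⟨ε, hε, hball⟩ := Metric.isOpen_iff.mp hO x hx
  obtain ⟨y, hyx, hyd⟩ := exists_near_ne hI hnd x hε
  have hyval : (y : ℝ) ≠ (x : ℝ) := fun h => hyx (Subtype.ext h)
  rw [abs_lt] at hyd
  have key : ∀ c d : ℝ, c ∈ I → d ∈ I → c < d →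
      (∀ r, c < r → r < d → (∃ h : r ∈ I, (⟨r, h⟩ : ↥I) ∈ O)) → O.Infinite := by
    intro c d _ _ hcd hsub
    have hinf : (Ioo c d).Infinite := Set.Ioo_infinite hcd
    set g : ℝ → ↥I := fun r => if h : r ∈ I then (⟨r, h⟩ : ↥I) else x with hgdef
    have hval : ∀ r ∈ Ioo c d, ((g r : ℝ) = r) ∧ g r ∈ O := by
      intro r hr
      obtain ⟨hrI, hrO⟩ := hsub r hr.1 hr.2
      have hgr : g r = ⟨r, hrI⟩ := by simp only [hgdef]; rw [dif_pos hrI]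
      exact ⟨by rw [hgr], by rw [hgr]; exact hrO⟩
    have hinj : Set.InjOn g (Ioo c d) := fun r hr s hs h => by
      have := congrArg Subtype.val h
      rwa [(hval r hr).1, (hval s hs).1] at this
    exact (hinf.image hinj).mono (by rintro _ ⟨r, hr, rfl⟩; exact (hval r hr).2)
  rcases hyval.lt_or_gt with h | h
  · refine key (y : ℝ) (x : ℝ) y.2 x.2 h ?_
    intro r h1 h2
    have hrI : r ∈ I := hI.out y.2 x.2 ⟨h1.le, h2.le⟩
    refine ⟨hrI, hball ?_⟩
    rw [Metric.mem_ball, Subtype.dist_eq, Real.dist_eq, abs_lt]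
    constructor <;> simp only [] <;> [linarith [hyd.1]; linarith]
  · refine key (x : ℝ) (y : ℝ) x.2 y.2 h ?_
    intro r h1 h2
    have hrI : r ∈ I := hI.out x.2 y.2 ⟨h1.le, h2.le⟩
    refine ⟨hrI, hball ?_⟩
    rw [Metric.mem_ball, Subtype.dist_eq, Real.dist_eq, abs_lt]
    constructor <;> simp only [] <;> [linarith; linarith [hyd.2]]

lemma ubtype (hI : I.OrdConnected) (x : ↥I) {w : ℝ} (hwI : w ∉ I) (hxw : (x : ℝ) < w) :
    ∀ i ∈ I, i ≤ w := by
  intro i hi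
  by_contra hlt
  push_neg at hlt
  exact hwI (hI.out x.2 hi ⟨hxw.le, hlt.le⟩)

lemma lbtype (hI : I.OrdConnected) (x : ↥I) {w : ℝ} (hwI : w ∉ I) (hwx : w < (x : ℝ)) :
    ∀ i ∈ I, w ≤ i := by
  intro i hi
  by_contra hlt
  push_neg at hlt
  exact hwI (hI.out hi x.2 ⟨hlt.le, hwx.le⟩)

lemma ubclash (hI : I.OrdConnected) (x : ↥I) {w u : ℝ} (hwI : w ∉ I)
    (hxw : (x : ℝ) < w) (huc : u ∈ closure I) (hwu : w < u) : False := by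
  obtain ⟨i, hiI, hid⟩ := Metric.mem_closure_iff.mp huc (u - w) (by linarith)
  have h1 : i ≤ w := ubtype hI x hwI hxw i hiI
  rw [Real.dist_eq, abs_lt] at hid
  linarith [hid.1]

lemma lbclash (hI : I.OrdConnected) (x : ↥I) {w l : ℝ} (hwI : w ∉ I)
    (hwx : w < (x : ℝ)) (hlc : l ∈ closure I) (hlw : l < w) : False := by
  obtain ⟨i, hiI, hid⟩ := Metric.mem_closure_iff.mp hlc (w - l) (by linarith)
  have h1 : w ≤ i := lbtype hI x hwI hwx i hiI
  rw [Real.dist_eq, abs_lt] at hid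
  linarith [hid.2]

lemma safe_radius (hI : I.OrdConnected) (x : ↥I) :
    ∃ δ > (0 : ℝ), ∀ w ∈ closure I, |w - (x : ℝ)| ≤ δ → w ∈ I := by
  by_cases hu : ∃ w ∈ closure I, (x : ℝ) < w ∧ w ∉ I
  · obtain ⟨u, huc, hxu, huI⟩ := hu
    by_cases hl : ∃ w ∈ closure I, w < (x : ℝ) ∧ w ∉ I
    · obtain ⟨l, hlc, hlx, hlI⟩ := hl
      refine ⟨min ((u - (x : ℝ)) / 2) (((x : ℝ) - l) / 2), lt_min (by linarith) (by linarith), ?_⟩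
      intro w hwc hwd
      by_contra hwI
      rw [abs_le] at hwd
      have hm1 : min ((u - (x : ℝ)) / 2) (((x : ℝ) - l) / 2) ≤ (u - (x : ℝ)) / 2 := min_le_left _ _
      have hm2 : min ((u - (x : ℝ)) / 2) (((x : ℝ) - l) / 2) ≤ (((x : ℝ)) - l) / 2 := min_le_right _ _
      rcases lt_trichotomy w (x : ℝ) with h | h | h
      · exact lbclash hI x hwI h hlc (by linarith [hwd.1])
      · exact hwI (h ▸ x.2)
      · exact ubclash hI x hwI h huc (by linarith [hwd.2])
    · push_neg at hl
      refine ⟨(u - (x : ℝ)) / 2, by linarith, ?_⟩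
      intro w hwc hwd
      by_contra hwI
      rw [abs_le] at hwd
      rcases lt_trichotomy w (x : ℝ) with h | h | h
      · exact hwI (hl w hwc h)
      · exact hwI (h ▸ x.2)
      · exact ubclash hI x hwI h huc (by linarith)
  · push_neg at hu
    by_cases hl : ∃ w ∈ closure I, w < (x : ℝ) ∧ w ∉ I
    · obtain ⟨l, hlc, hlx, hlI⟩ := hl
      refine ⟨((x : ℝ) - l) / 2, by linarith, ?_⟩
      intro w hwc hwd
      by_contra hwI
      rw [abs_le] at hwd
      rcases lt_trichotomy w (x : ℝ) with h | h | h
      · exact lbclash hI x hwI h hlc (by linarith)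
      · exact hwI (h ▸ x.2)
      · exact hwI (hu w hwc h)
    · push_neg at hl
      refine ⟨1, one_pos, ?_⟩
      intro w hwc _
      rcases lt_trichotomy w (x : ℝ) with h | h | h
      · by_contra hwI; exact hwI (hl w hwc h)
      · exact h ▸ x.2
      · by_contra hwI; exact hwI (hu w hwc h)

lemma weaklyLocallyCompact (hI : I.OrdConnected) : WeaklyLocallyCompactSpace ↥I := by
  constructor
  intro x
  obtain ⟨δ, hδ, hsafe⟩ := safe_radius hI x
  refine ⟨Subtype.val ⁻¹' (Icc ((x : ℝ) - δ) ((x : ℝ) + δ)), ?_, ?_⟩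
  · rw [IsEmbedding.subtypeVal.isCompact_iff, Subtype.image_preimage_coe]
    refine IsCompact.of_isClosed_subset isCompact_Icc ?_ inter_subset_right
    apply isClosed_of_closure_subset
    intro w hw
    have h1 : w ∈ closure I ∩ Icc ((x : ℝ) - δ) ((x : ℝ) + δ) := by
      refine (closure_inter_subset_inter_closure _ _).trans ?_ hw
      exact inter_subset_inter_right _ isClosed_Icc.closure_subset
    refine ⟨hsafe w h1.1 ?_, h1.2⟩
    rw [abs_le]
    exact ⟨by linarith [h1.2.1], by linarith [h1.2.2]⟩
  · rw [mem_nhds_iff]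
    refine ⟨Subtype.val ⁻¹' (Ioo ((x : ℝ) - δ) ((x : ℝ) + δ)),
      preimage_mono Ioo_subset_Icc_self, isOpen_Ioo.preimage continuous_subtype_val, ?_⟩
    exact ⟨by simp [hδ], by simp [hδ]⟩

lemma baire (hI : I.OrdConnected) : BaireSpace ↥I := by
  haveI := weaklyLocallyCompact hI
  infer_instance

/-- `t` has a "strongly transitive" (dense, with late times) forward orbit. -/
def GoodPt (f : ↥I → ↥I) (t : ↥I) : Prop :=
  ∀ W : Set ↥I, IsOpen W → W.Nonempty → ∀ T₀ : ℕ, ∃ n, T₀ < n ∧ f^[n] t ∈ W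

lemma dense_goodPt (hI : I.OrdConnected) (hnd : ∃ a b : ℝ, a ∈ I ∧ b ∈ I ∧ a ≠ b)
    (f : ↥I → ↥I) (hf : Continuous f) (htrans : TopTransitive f) :
    Dense {t : ↥I | GoodPt f t} := by
  haveI := baire hI
  obtain ⟨b, hbc, hbne, hbasis⟩ := TopologicalSpace.exists_countable_basis ↥I
  set S : Set (Set ↥I) := (fun B => ⋃ n : ℕ, f^[n + 1] ⁻¹' B) '' b with hS
  have hSopen : ∀ s ∈ S, IsOpen s := by
    rintro s ⟨B, hB, rfl⟩
    exact isOpen_iUnion fun n => (hbasis.isOpen hB).preimage (hf.iterate _)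
  have hSdense : ∀ s ∈ S, Dense s := by
    rintro s ⟨B, hB, rfl⟩
    rw [dense_iff_inter_open]
    intro V hV hVne
    have hBne : B.Nonempty := nonempty_iff_ne_empty.mpr fun h => hbne (h ▸ hB)
    obtain ⟨n, hn, z, ⟨v, hvV, rfl⟩, hvB⟩ := htrans V B hV (hbasis.isOpen hB) hVne hBne
    refine ⟨v, hvV, mem_iUnion.mpr ⟨n - 1, ?_⟩⟩
    have : n - 1 + 1 = n := Nat.succ_pred_eq_of_pos hn
    rw [this]
    exact hvB
  have hdense : Dense (⋂₀ S) := dense_sInter_of_isOpen hSopen (hbc.image _) hSdense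
  refine hdense.mono ?_
  intro t ht W hW hWne T₀
  have hfin : (Set.Finite ((fun n => f^[n] t) '' {n | n ≤ T₀})) :=
    (Set.finite_Iic T₀).image _
  have hW'ne : (W \ ((fun n => f^[n] t) '' {n | n ≤ T₀})).Nonempty :=
    ((isOpen_infinite hI hnd hW hWne).diff hfin).nonempty
  obtain ⟨w, hwW⟩ := hW'ne
  have hW'open : IsOpen (W \ ((fun n => f^[n] t) '' {n | n ≤ T₀})) :=
    hW.sdiff hfin.isClosed
  obtain ⟨B, hBb, hwB, hBsub⟩ := hbasis.exists_subset_of_mem_open hwW hW'open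
  have htB := ht _ ⟨B, hBb, rfl⟩
  obtain ⟨n, hn⟩ := mem_iUnion.mp htB
  have hmem := hBsub hn
  refine ⟨n + 1, ?_, hmem.1⟩
  by_contra hle
  push_neg at hle
  exact hmem.2 ⟨n + 1, hle, rfl⟩

lemma iterate_mod {α : Type*} {g : α → α} {π : α} {p : ℕ} (hfix : g^[p] π = π) (k : ℕ) :
    g^[k] π = g^[k % p] π := by
  conv_lhs => rw [← Nat.mod_add_div k p]
  have h2 : g^[p * (k / p)] π = π := by
    rw [Function.iterate_mul]; exact Function.iterate_fixed hfix _
  rw [Function.iterate_add_apply, h2]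

lemma mod_sub_eq {p r M : ℕ} (hp : 0 < p) (hdvd : p ∣ M) (hrM : r ≤ M) :
    (M - r) % p = (p - r % p) % p := by
  have h1 : ((M - r) % p + r % p) % p = 0 := by
    rw [← Nat.add_mod, Nat.sub_add_cancel hrM]
    obtain ⟨q, rfl⟩ := hdvd
    simp [Nat.mul_mod_right]
  have hA : (M - r) % p < p := Nat.mod_lt _ hp
  have hB : r % p < p := Nat.mod_lt _ hp
  obtain ⟨c, hc⟩ := Nat.dvd_of_mod_eq_zero h1
  have hc2 : c < 2 := by
    rcases Nat.lt_or_ge c 2 with h | h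
    · exact h
    · exfalso
      have : p * 2 ≤ p * c := Nat.mul_le_mul_left _ h
      omega
  rcases Nat.eq_zero_or_pos (r % p) with h0 | h0
  · rw [h0, Nat.sub_zero, Nat.mod_self]
    interval_cases c <;> omega
  · have hlt : p - r % p < p := Nat.sub_lt hp h0
    rw [Nat.mod_eq_of_lt hlt]
    interval_cases c <;> omega

lemma exists_mod_pair (g : ℕ → ℕ) {p : ℕ} (hp : 0 < p) :
    ∃ j k, j < k ∧ g j % p = g k % p := by
  obtain ⟨j, k, hne, h⟩ :=
    Finite.exists_ne_map_eq_of_infinite (fun m => (⟨g m % p, Nat.mod_lt _ hp⟩ : Fin p))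
  have heq : g j % p = g k % p := by simpa [Fin.ext_iff] using h
  rcases hne.lt_or_gt with h' | h'
  · exact ⟨j, k, h', heq⟩
  · exact ⟨k, j, h', heq.symm⟩

lemma exists_fixed_in_Icc (hI : I.OrdConnected) {g : ↥I → ↥I} (hg : Continuous g)
    {lo hi : ↥I} {w w' : ↥I} (hw : w ∈ Icc lo hi) (hw' : w' ∈ Icc lo hi)
    (h1 : ((g w : ℝ)) ≤ w) (h2 : (w' : ℝ) ≤ g w') : ∃ z ∈ Icc lo hi, g z = z := by
  have hpre := isPreconnected_Icc' hI lo hi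
  obtain ⟨z, hz, hzeq⟩ := hpre.intermediate_value₂ hw hw'
    (f := fun y => ((g y : ℝ))) (g := fun y : ↥I => (y : ℝ))
    ((continuous_subtype_val.comp hg).continuousOn)
    continuous_subtype_val.continuousOn h1 h2
  exact ⟨z, hz, Subtype.ext hzeq⟩

lemma exists_dec_seq (hI : I.OrdConnected) {f : ↥I → ↥I} {t : ↥I} (hGood : GoodPt f t)
    {l1 l2 : ↥I} (h12 : (l1 : ℝ) < l2) (r0 : ℕ) :
    ∃ g : ℕ → ℕ, (∀ k, 1 ≤ g k) ∧ (∀ k, g k + r0 < g (k + 1)) ∧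
      (∀ k, (l1 : ℝ) < (f^[g k] t : ℝ)) ∧ ((f^[g 0] t : ℝ) < l2) ∧
      (∀ k, ((f^[g (k + 1)] t : ℝ)) < (f^[g k] t : ℝ)) := by
  have step : ∀ (N : ℕ) (x : ↥I), ∃ m,
      ((l1 : ℝ) < x → (N < m ∧ f^[m] t ∈ win I l1 x)) := by
    intro N x
    by_cases h : (l1 : ℝ) < x
    · obtain ⟨w, hw⟩ := exists_mem_win hI h
      obtain ⟨m, hm1, hm2⟩ := hGood (win I l1 x) (isOpen_win _ _) ⟨w, hw⟩ N
      exact ⟨m, fun _ => ⟨hm1, hm2⟩⟩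
    · exact ⟨0, fun hx => absurd hx h⟩
  choose Φ hΦ using step
  set g : ℕ → ℕ := fun k =>
    Nat.rec (Φ 0 l2) (fun _ prev => Φ (prev + r0) (f^[prev] t)) k with hgdef
  have hg0 : g 0 = Φ 0 l2 := rfl
  have hgs : ∀ k, g (k + 1) = Φ (g k + r0) (f^[g k] t) := fun k => rfl
  have hbase := hΦ 0 l2 h12
  rw [← hg0] at hbase
  have hinv : ∀ k, (l1 : ℝ) < (f^[g k] t : ℝ) := by
    intro k
    induction k with
    | zero => exact hbase.2.1
    | succ k ih =>
        have := (hΦ (g k + r0) (f^[g k] t) ih).2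
        rw [← hgs k] at this
        exact this.1
  refine ⟨g, ?_, ?_, hinv, hbase.2.2, ?_⟩
  · intro k
    cases k with
    | zero => exact hbase.1
    | succ k =>
        have := (hΦ (g k + r0) (f^[g k] t) (hinv k)).1
        rw [← hgs k] at this
        omega
  · intro k
    have := (hΦ (g k + r0) (f^[g k] t) (hinv k)).1
    rw [← hgs k] at this
    exact this
  · intro k
    have := (hΦ (g k + r0) (f^[g k] t) (hinv k)).2
    rw [← hgs k] at this
    exact this.2

lemma exists_inc_seq (hI : I.OrdConnected) {f : ↥I → ↥I} {t : ↥I} (hGood : GoodPt f t)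
    {l1 l2 : ↥I} (h12 : (l1 : ℝ) < l2) (r0 : ℕ) :
    ∃ g : ℕ → ℕ, (∀ k, 1 ≤ g k) ∧ (∀ k, g k + r0 < g (k + 1)) ∧
      (∀ k, (f^[g k] t : ℝ) < (l2 : ℝ)) ∧ ((l1 : ℝ) < (f^[g 0] t : ℝ)) ∧
      (∀ k, ((f^[g k] t : ℝ)) < (f^[g (k + 1)] t : ℝ)) := by
  have step : ∀ (N : ℕ) (x : ↥I), ∃ m,
      ((x : ℝ) < l2 → (N < m ∧ f^[m] t ∈ win I x l2)) := by
    intro N x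
    by_cases h : (x : ℝ) < l2
    · obtain ⟨w, hw⟩ := exists_mem_win hI h
      obtain ⟨m, hm1, hm2⟩ := hGood (win I x l2) (isOpen_win _ _) ⟨w, hw⟩ N
      exact ⟨m, fun _ => ⟨hm1, hm2⟩⟩
    · exact ⟨0, fun hx => absurd hx h⟩
  choose Φ hΦ using step
  set g : ℕ → ℕ := fun k =>
    Nat.rec (Φ 0 l1) (fun _ prev => Φ (prev + r0) (f^[prev] t)) k with hgdef
  have hg0 : g 0 = Φ 0 l1 := rfl
  have hgs : ∀ k, g (k + 1) = Φ (g k + r0) (f^[g k] t) := fun k => rfl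
  have hbase := hΦ 0 l1 h12
  rw [← hg0] at hbase
  have hinv : ∀ k, (f^[g k] t : ℝ) < (l2 : ℝ) := by
    intro k
    induction k with
    | zero => exact hbase.2.2
    | succ k ih =>
        have := (hΦ (g k + r0) (f^[g k] t) ih).2
        rw [← hgs k] at this
        exact this.2
  refine ⟨g, ?_, ?_, hinv, hbase.2.1, ?_⟩
  · intro k
    cases k with
    | zero => exact hbase.1
    | succ k =>
        have := (hΦ (g k + r0) (f^[g k] t) (hinv k)).1
        rw [← hgs k] at this
        omega
  · intro k
    have := (hΦ (g k + r0) (f^[g k] t) (hinv k)).1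
    rw [← hgs k] at this
    exact this
  · intro k
    have := (hΦ (g k + r0) (f^[g k] t) (hinv k)).2
    rw [← hgs k] at this
    exact this.1

lemma isOpen_strictBetween (A : Set ↥I) :
    IsOpen {w : ↥I | ∃ u ∈ A, ∃ v ∈ A, (u : ℝ) < w ∧ (w : ℝ) < v} := by
  rw [isOpen_iff_forall_mem_open]
  rintro w ⟨u, hu, v, hv, h1, h2⟩
  exact ⟨win I u v, fun z hz => ⟨u, hu, v, hv, hz.1, hz.2⟩, isOpen_win _ _, h1, h2⟩

lemma preconn_strictBetween (hI : I.OrdConnected) (A : Set ↥I) :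
    IsPreconnected {w : ↥I | ∃ u ∈ A, ∃ v ∈ A, (u : ℝ) < w ∧ (w : ℝ) < v} := by
  apply preconn_of_between hI
  rintro a ⟨u1, hu1, v1, hv1, ha1, ha2⟩ b ⟨u2, hu2, v2, hv2, hb1, hb2⟩ y h1 h2
  exact ⟨u1, hu1, v2, hv2, ha1.trans_le (Subtype.coe_le_coe.mpr h1),
    lt_of_le_of_lt (Subtype.coe_le_coe.mpr h2) hb2⟩

lemma perPts_inter_nonempty (hI : I.OrdConnected) (hnd : ∃ a b : ℝ, a ∈ I ∧ b ∈ I ∧ a ≠ b)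
    (f : ↥I → ↥I) (hf : Continuous f) (htrans : TopTransitive f)
    {U0 : Set ↥I} (hU0 : IsOpen U0) (hU0ne : U0.Nonempty) :
    (U0 ∩ PerPts f).Nonempty := by
  by_contra hcon
  rw [Set.not_nonempty_iff_eq_empty] at hcon
  have hU0P : U0 ∩ closure (PerPts f) = ∅ := by
    apply eq_empty_of_subset_empty
    refine (hU0.inter_closure).trans ?_
    rw [hcon, closure_empty]
  set U : Set ↥I := (closure (PerPts f))ᶜ with hU
  have hUopen : IsOpen U := isClosed_closure.isOpen_compl
  have hdense := dense_goodPt hI hnd f hf htrans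
  obtain ⟨t1, ht1G, ht1U0⟩ := hdense.exists_mem_open hU0 hU0ne
  have ht1U : t1 ∈ U := by
    intro hc
    exact absurd (mem_inter ht1U0 hc) (by rw [hU0P]; exact notMem_empty t1)
  set J : Set ↥I := connectedComponentIn U t1 with hJ
  have htJ1 : t1 ∈ J := mem_connectedComponentIn ht1U
  have hJU : J ⊆ U := connectedComponentIn_subset _ _
  have hJpre : IsPreconnected J := isPreconnected_connectedComponentIn
  have hJP : ∀ z ∈ J, z ∉ PerPts f := fun z hz hzP => (hJU hz) (subset_closure hzP)
  have hJbet' : ∀ u ∈ J, ∀ v ∈ J, ∀ y : ↥I, (u : ℝ) ≤ y → (y : ℝ) ≤ v → y ∈ J :=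
    fun u hu v hv y h1 h2 =>
      between_mem_of_preconn hJpre hu hv (Subtype.coe_le_coe.mp h1) (Subtype.coe_le_coe.mp h2)
  have hJopen : IsOpen J := by
    rw [Metric.isOpen_iff]
    intro y hy
    obtain ⟨ε, hε, hball⟩ := Metric.isOpen_iff.mp hUopen y (hJU hy)
    refine ⟨ε, hε, ?_⟩
    have hbpre : IsPreconnected (Metric.ball y ε) := by
      apply preconn_of_between hI
      intro u hu v hv z h1 h2
      rw [Metric.mem_ball, Subtype.dist_eq, Real.dist_eq] at hu hv ⊢
      rw [abs_lt] at hu hv ⊢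
      have h1' : (u : ℝ) ≤ z := h1
      have h2' : (z : ℝ) ≤ v := h2
      constructor <;> [linarith [hu.1]; linarith [hv.2]]
    have hsub := hbpre.subset_connectedComponentIn (Metric.mem_ball_self hε) hball
    rwa [hJ, connectedComponentIn_eq (show y ∈ connectedComponentIn U t1 from hJ ▸ hy)]
  -- the order-interior of J
  set J0 : Set ↥I := {y : ↥I | ∃ u ∈ J, ∃ v ∈ J, (u : ℝ) < y ∧ (y : ℝ) < v} with hJ0
  have hJ0sub : J0 ⊆ J := by
    rintro y ⟨u, hu, v, hv, h1, h2⟩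
    exact hJbet' u hu v hv y h1.le h2.le
  have hJ0open : IsOpen J0 := isOpen_strictBetween J
  have hJ0win : ∀ u ∈ J, ∀ v ∈ J, ∀ y : ↥I, (u : ℝ) < y → (y : ℝ) < v → y ∈ J0 :=
    fun u hu v hv y h1 h2 => ⟨u, hu, v, hv, h1, h2⟩
  have hJ0ne : J0.Nonempty := by
    obtain ⟨ε, hε, hball⟩ := Metric.isOpen_iff.mp hJopen t1 htJ1
    obtain ⟨y, hyne, hyd⟩ := exists_near_ne hI hnd t1 hε
    have hyJ : y ∈ J := hball (by rw [Metric.mem_ball, Subtype.dist_eq, Real.dist_eq]; exact hyd)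
    have hyval : (y : ℝ) ≠ t1 := fun h => hyne (Subtype.ext h)
    rcases hyval.lt_or_gt with h | h
    · obtain ⟨w, hw⟩ := exists_mem_win hI h
      exact ⟨w, hJ0win y hyJ t1 htJ1 w hw.1 hw.2⟩
    · obtain ⟨w, hw⟩ := exists_mem_win hI h
      exact ⟨w, hJ0win t1 htJ1 y hyJ w hw.1 hw.2⟩
  obtain ⟨t, htG, htJ0⟩ := hdense.exists_mem_open hJ0open hJ0ne
  have htJ : t ∈ J := hJ0sub htJ0
  obtain ⟨r0, hr0pos, hr0vis⟩ : ∃ r0, 0 < r0 ∧ f^[r0] t ∈ J0 := by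
    obtain ⟨n, hn, hmem⟩ := htG J0 hJ0open hJ0ne 0
    exact ⟨n, hn, hmem⟩
  by_cases hQ : ∃ κ ∈ J0, f^[r0] κ ∈ PerPts f
  · -- GOOD case: some point of J0 is mapped by f^[r0] onto a periodic point
    obtain ⟨kp, hκJ0, hπ⟩ := hQ
    obtain ⟨p, hp, hpfix⟩ := hπ
    set pi : ↥I := f^[r0] kp with hπdef
    set e : ℕ := (p - r0 % p) % p with he
    set c : ↥I := f^[e] pi with hcdef
    have hcfix : f^[p] c = c := by
      rw [hcdef, ← Function.iterate_add_apply]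
      rw [show p + e = e + p from Nat.add_comm p e]
      rw [Function.iterate_add_apply, hpfix]
    have hcJ : c ∉ J := fun hcJ => hJP c hcJ ⟨p, hp, hcfix⟩
    have hMκ : ∀ M, r0 ≤ M → p ∣ M → f^[M] kp = c := by
      intro M hrM hdvd
      have h1 : f^[M] kp = f^[M - r0] pi := by
        rw [hπdef, ← Function.iterate_add_apply]
        congr 1
        omega
      rw [h1, iterate_mod hpfix (M - r0), mod_sub_eq hp hdvd hrM]
    have hκJ : kp ∈ J := hJ0sub hκJ0
    obtain ⟨u, huJ, v, hvJ, huκ, hκv⟩ := hκJ0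
    have hside : (∀ y ∈ J, (y : ℝ) < c) ∨ (∀ y ∈ J, (c : ℝ) < y) := by
      by_contra hcon2
      push_neg at hcon2
      obtain ⟨⟨y1, hy1, hy1c⟩, ⟨y2, hy2, hy2c⟩⟩ := hcon2
      exact hcJ (hJbet' y2 hy2 y1 hy1 c hy2c hy1c)
    rcases hside with hl | hr
    · -- hot: c is above J; decreasing sequence below kp
      obtain ⟨a1, ha1⟩ := exists_mem_win hI huκ
      obtain ⟨a2, ha2⟩ := exists_mem_win hI ha1.2
      have ha1J : a1 ∈ J := hJbet' u huJ kp hκJ a1 ha1.1.le ha1.2.le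
      have ha2J : a2 ∈ J := hJbet' a1 ha1J kp hκJ a2 ha2.1.le ha2.2.le
      obtain ⟨g, hg1, hggap, hglow, hgfirst, hgdec⟩ := exists_dec_seq hI htG ha2.1 r0
      have hanti : StrictAnti (fun k => (f^[g k] t : ℝ)) := strictAnti_nat_of_succ_lt hgdec
      have hmono : StrictMono g := strictMono_nat_of_lt_succ (fun k => by have := hggap k; omega)
      have hvallt : ∀ k, (f^[g k] t : ℝ) < a2 := by
        intro k
        induction k with
        | zero => exact hgfirst
        | succ k ih => exact (hgdec k).trans ih
      have hvalJ : ∀ k, f^[g k] t ∈ J := fun k =>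
        hJbet' a1 ha1J a2 ha2J _ (hglow k).le (hvallt k).le
      obtain ⟨j, k, hjk, hmod⟩ := exists_mod_pair g hp
      set M := g k - g j with hM
      have hgap : g j + r0 < g k := lt_of_lt_of_le (hggap j) (hmono.monotone (Nat.succ_le_of_lt hjk))
      have hMr0 : r0 ≤ M := by omega
      have hdvd : p ∣ M := by
        refine ⟨g k / p - g j / p, ?_⟩
        have h1 := Nat.div_add_mod (g j) p
        have h2 := Nat.div_add_mod (g k) p
        rw [Nat.mul_sub]
        omega
      have hMκ' : f^[M] kp = c := hMκ M hMr0 hdvd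
      have hMx : f^[M] (f^[g j] t) = f^[g k] t := by
        rw [← Function.iterate_add_apply]
        congr 1
        omega
      set xj := f^[g j] t with hxj
      set xk := f^[g k] t with hxk
      have hxjval : (xj : ℝ) < kp := (hvallt j).trans ha2.2
      have hxkval : (xk : ℝ) < (xj : ℝ) := hanti hjk
      have hxjκ : xj ≤ kp := Subtype.coe_le_coe.mp hxjval.le
      have hκK : kp ∈ Icc xj kp := ⟨hxjκ, le_refl _⟩
      have hxjK : xj ∈ Icc xj kp := ⟨le_refl _, hxjκ⟩
      have hKpre : IsPreconnected (Icc xj kp) := isPreconnected_Icc' hI _ _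
      have himg : IsPreconnected (f^[M] '' (Icc xj kp)) :=
        hKpre.image _ ((hf.iterate M).continuousOn)
      have hxkim : xk ∈ f^[M] '' (Icc xj kp) := ⟨xj, hxjK, hMx⟩
      have hcim : c ∈ f^[M] '' (Icc xj kp) := ⟨kp, hκK, hMκ'⟩
      have hxjc : (xj : ℝ) < c := hl xj (hvalJ j)
      have hκc : (kp : ℝ) < c := hl kp hκJ
      have hxjim : xj ∈ f^[M] '' (Icc xj kp) :=
        between_mem_of_preconn himg hxkim hcim (Subtype.coe_le_coe.mp hxkval.le)
          (Subtype.coe_le_coe.mp hxjc.le)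
      have hκim : kp ∈ f^[M] '' (Icc xj kp) :=
        between_mem_of_preconn himg hxkim hcim
          (Subtype.coe_le_coe.mp (hxkval.trans hxjval).le) (Subtype.coe_le_coe.mp hκc.le)
      obtain ⟨w, hwK, hweq⟩ := hxjim
      obtain ⟨w', hw'K, hw'eq⟩ := hκim
      obtain ⟨z, hzK, hzfix⟩ := exists_fixed_in_Icc hI (hf.iterate M) hwK hw'K
        (by rw [hweq]; exact Subtype.coe_le_coe.mpr hwK.1)
        (by rw [hw'eq]; exact Subtype.coe_le_coe.mpr hw'K.2)
      refine hJP z (hJbet' xj (hvalJ j) kp hκJ z ?_ ?_) ⟨M, by omega, hzfix⟩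
      · exact Subtype.coe_le_coe.mpr hzK.1
      · exact Subtype.coe_le_coe.mpr hzK.2
    · -- cold: c is below J; increasing sequence above kp
      obtain ⟨a1, ha1⟩ := exists_mem_win hI hκv
      obtain ⟨a2, ha2⟩ := exists_mem_win hI ha1.1
      -- here a1 ∈ (kp, v), a2 ∈ (kp, a1): kp < a2 < a1
      have ha1J : a1 ∈ J := hJbet' kp hκJ v hvJ a1 ha1.1.le ha1.2.le
      have ha2J : a2 ∈ J := hJbet' kp hκJ a1 ha1J a2 ha2.1.le ha2.2.le
      obtain ⟨g, hg1, hggap, hghigh, hgfirst, hginc⟩ := exists_inc_seq hI htG ha2.2 r0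
      have hmonov : StrictMono (fun k => (f^[g k] t : ℝ)) := strictMono_nat_of_lt_succ hginc
      have hmono : StrictMono g := strictMono_nat_of_lt_succ (fun k => by have := hggap k; omega)
      have hvalgt : ∀ k, (a2 : ℝ) < (f^[g k] t : ℝ) := by
        intro k
        induction k with
        | zero => exact hgfirst
        | succ k ih => exact ih.trans (hginc k)
      have hvalJ : ∀ k, f^[g k] t ∈ J := fun k =>
        hJbet' a2 ha2J a1 ha1J _ (hvalgt k).le (hghigh k).le
      obtain ⟨j, k, hjk, hmod⟩ := exists_mod_pair g hp
      set M := g k - g j with hM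
      have hgap : g j + r0 < g k := lt_of_lt_of_le (hggap j) (hmono.monotone (Nat.succ_le_of_lt hjk))
      have hMr0 : r0 ≤ M := by omega
      have hdvd : p ∣ M := by
        refine ⟨g k / p - g j / p, ?_⟩
        have h1 := Nat.div_add_mod (g j) p
        have h2 := Nat.div_add_mod (g k) p
        rw [Nat.mul_sub]
        omega
      have hMκ' : f^[M] kp = c := hMκ M hMr0 hdvd
      have hMx : f^[M] (f^[g j] t) = f^[g k] t := by
        rw [← Function.iterate_add_apply]
        congr 1
        omega
      set xj := f^[g j] t with hxj
      set xk := f^[g k] t with hxk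
      have hxjval : (kp : ℝ) < xj := ha2.1.trans (hvalgt j)
      have hxkval : (xj : ℝ) < (xk : ℝ) := hmonov hjk
      have hκxj : kp ≤ xj := Subtype.coe_le_coe.mp hxjval.le
      have hκK : kp ∈ Icc kp xj := ⟨le_refl _, hκxj⟩
      have hxjK : xj ∈ Icc kp xj := ⟨hκxj, le_refl _⟩
      have hKpre : IsPreconnected (Icc kp xj) := isPreconnected_Icc' hI _ _
      have himg : IsPreconnected (f^[M] '' (Icc kp xj)) :=
        hKpre.image _ ((hf.iterate M).continuousOn)
      have hxkim : xk ∈ f^[M] '' (Icc kp xj) := ⟨xj, hxjK, hMx⟩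
      have hcim : c ∈ f^[M] '' (Icc kp xj) := ⟨kp, hκK, hMκ'⟩
      have hxjc : (c : ℝ) < xj := hr xj (hvalJ j)
      have hκc : (c : ℝ) < kp := hr kp hκJ
      have hxjim : xj ∈ f^[M] '' (Icc kp xj) :=
        between_mem_of_preconn himg hcim hxkim (Subtype.coe_le_coe.mp hxjc.le)
          (Subtype.coe_le_coe.mp hxkval.le)
      have hκim : kp ∈ f^[M] '' (Icc kp xj) :=
        between_mem_of_preconn himg hcim hxkim (Subtype.coe_le_coe.mp hκc.le)
          (Subtype.coe_le_coe.mp (hxjval.trans hxkval).le)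
      obtain ⟨w, hwK, hweq⟩ := hxjim
      obtain ⟨w', hw'K, hw'eq⟩ := hκim
      obtain ⟨z, hzK, hzfix⟩ := exists_fixed_in_Icc hI (hf.iterate M) hw'K hwK
        (by rw [hw'eq]; exact Subtype.coe_le_coe.mpr hw'K.1)
        (by rw [hweq]; exact Subtype.coe_le_coe.mpr hwK.2)
      refine hJP z (hJbet' kp hκJ xj (hvalJ j) z ?_ ?_) ⟨M, by omega, hzfix⟩
      · exact Subtype.coe_le_coe.mpr hzK.1
      · exact Subtype.coe_le_coe.mpr hzK.2
  · -- BAD case: f^[r0] '' J0 contains no periodic points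
    push_neg at hQ
    set xr : ↥I := f^[r0] t with hxrdef
    have hxrJ0 : xr ∈ J0 := hr0vis
    have hxrJ : xr ∈ J := hJ0sub hxrJ0
    set S : Set ↥I := f^[r0] '' J0 with hSdef
    have hxrS : xr ∈ S := ⟨t, htJ0, rfl⟩
    have hSP : ∀ z ∈ S, z ∉ PerPts f := by
      rintro z ⟨κ, hκ, rfl⟩ hper
      exact hQ κ hκ hper
    have hJ0pre : IsPreconnected J0 := preconn_strictBetween hI J
    have hSpre : IsPreconnected S := hJ0pre.image _ ((hf.iterate r0).continuousOn)
    have hSbet : ∀ u ∈ S, ∀ v ∈ S, ∀ y : ↥I, (u : ℝ) ≤ y → (y : ℝ) ≤ v → y ∈ S :=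
      fun u hu v hv y h1 h2 =>
        between_mem_of_preconn hSpre hu hv (Subtype.coe_le_coe.mp h1) (Subtype.coe_le_coe.mp h2)
    -- Claim A: points strictly between two points of S lie in J
    have hClaimA : ∀ y : ↥I, (∃ s1 ∈ S, (s1 : ℝ) < y) → (∃ s2 ∈ S, (y : ℝ) < s2) → y ∈ J := by
      intro y ⟨s1, hs1, h1⟩ ⟨s2, hs2, h2⟩
      have hyS : y ∈ S := hSbet s1 hs1 s2 hs2 y h1.le h2.le
      set S1 : Set ↥I := {w : ↥I | ∃ u ∈ S, ∃ v ∈ S, (u : ℝ) < w ∧ (w : ℝ) < v} with hS1def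
      have hyS1 : y ∈ S1 := ⟨s1, hs1, s2, hs2, h1, h2⟩
      have hS1pre : IsPreconnected S1 := preconn_strictBetween hI S
      have hS1sub : S1 ⊆ S := by
        rintro w ⟨u, hu, v, hv, hw1, hw2⟩
        exact hSbet u hu v hv w hw1.le hw2.le
      have hS1U : S1 ⊆ U := by
        rintro w ⟨u, hu, v, hv, hw1, hw2⟩
        intro hwc
        obtain ⟨q, hq, hqP⟩ := mem_closure_iff.mp hwc (win I u v) (isOpen_win _ _) ⟨hw1, hw2⟩
        exact hSP q (hSbet u hu v hv q hq.1.le hq.2.le) hqP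
      -- a point of S1 ∩ J
      obtain ⟨w0, hw0S1, hw0J⟩ : ∃ w0, w0 ∈ S1 ∧ w0 ∈ J := by
        obtain ⟨u', hu'J, v', hv'J, hu'xr, hxrv'⟩ := hxrJ0
        rcases lt_trichotomy (y : ℝ) (xr : ℝ) with hc | hc | hc
        · obtain ⟨r, hr1, hr2⟩ := exists_between (max_lt hc hu'xr)
          have hrI : r ∈ I := hI.out y.2 xr.2 ⟨((le_max_left _ _).trans hr1.le), hr2.le⟩
          refine ⟨⟨r, hrI⟩, ⟨y, hyS, xr, hxrS, (le_max_left _ _).trans_lt hr1, hr2⟩, ?_⟩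
          exact hJbet' u' hu'J xr hxrJ _ ((le_max_right _ _).trans hr1.le) hr2.le
        · exact ⟨y, hyS1, by rwa [show y = xr from Subtype.ext hc]⟩
        · obtain ⟨r, hr1, hr2⟩ := exists_between (lt_min hc hxrv')
          have hrI : r ∈ I := hI.out xr.2 y.2 ⟨hr1.le, (hr2.trans_le (min_le_left _ _)).le⟩
          refine ⟨⟨r, hrI⟩, ⟨xr, hxrS, y, hyS, hr1, hr2.trans_le (min_le_left _ _)⟩, ?_⟩
          exact hJbet' xr hxrJ v' hv'J _ hr1.le (hr2.trans_le (min_le_right _ _)).le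
      have hsub := hS1pre.subset_connectedComponentIn hw0S1 hS1U
      rw [hJ, connectedComponentIn_eq (show w0 ∈ connectedComponentIn U t1 from hJ ▸ hw0J)]
      exact hsub hyS1
    -- Claim B: S ⊆ closure J
    have hClaimB : S ⊆ closure J := by
      intro sp hsp
      rw [Metric.mem_closure_iff]
      intro ε hε
      rcases lt_trichotomy (sp : ℝ) (xr : ℝ) with hc | hc | hc
      · obtain ⟨r, hr1, hr2⟩ := exists_between (lt_min hc (lt_add_of_pos_right (sp : ℝ) hε))
        have hrI : r ∈ I := hI.out sp.2 xr.2 ⟨hr1.le, (hr2.trans_le (min_le_left _ _)).le⟩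
        refine ⟨⟨r, hrI⟩, hClaimA _ ⟨sp, hsp, hr1⟩ ⟨xr, hxrS, hr2.trans_le (min_le_left _ _)⟩, ?_⟩
        rw [Subtype.dist_eq, Real.dist_eq, abs_lt]
        have hstr : r < (sp : ℝ) + ε := hr2.trans_le (min_le_right _ _)
        constructor
        · show -ε < (sp : ℝ) - r; linarith
        · show (sp : ℝ) - r < ε; linarith
      · refine ⟨xr, hxrJ, ?_⟩
        rw [Subtype.dist_eq, Real.dist_eq, hc]
        simpa using hε
      · obtain ⟨r, hr1, hr2⟩ := exists_between (max_lt hc (sub_lt_self (sp : ℝ) hε))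
        have hrI : r ∈ I := hI.out xr.2 sp.2 ⟨(le_max_left _ _).trans hr1.le, hr2.le⟩
        refine ⟨⟨r, hrI⟩, hClaimA _ ⟨xr, hxrS, (le_max_left _ _).trans_lt hr1⟩ ⟨sp, hsp, hr2⟩, ?_⟩
        rw [Subtype.dist_eq, Real.dist_eq, abs_lt]
        have hstr : (sp : ℝ) - ε < r := (le_max_right (↑xr) ((sp : ℝ) - ε)).trans_lt hr1
        constructor
        · show -ε < (sp : ℝ) - r; linarith
        · show (sp : ℝ) - r < ε; linarith
    -- closure J = closure J0 and invariance of closure J under f^[r0]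
    have hJJ0 : J ⊆ closure J0 := by
      intro y hy
      rw [Metric.mem_closure_iff]
      intro ε hε
      obtain ⟨δ, hδ, hball⟩ := Metric.isOpen_iff.mp hJopen y hy
      have hδ' : 0 < min δ ε := lt_min hδ hε
      obtain ⟨z1, hz1ne, hz1d⟩ := exists_near_ne hI hnd y hδ'
      have hz1J : z1 ∈ J := hball (by
        rw [Metric.mem_ball, Subtype.dist_eq, Real.dist_eq]
        exact hz1d.trans_le (min_le_left _ _))
      have hz1val : (z1 : ℝ) ≠ y := fun h => hz1ne (Subtype.ext h)
      rw [abs_lt] at hz1d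
      rcases hz1val.lt_or_gt with h | h
      · obtain ⟨w, hw⟩ := exists_mem_win hI h
        refine ⟨w, hJ0win z1 hz1J y hy w hw.1 hw.2, ?_⟩
        rw [Subtype.dist_eq, Real.dist_eq, abs_lt]
        constructor
        · linarith [hw.1, hw.2, hz1d.1, hz1d.2, min_le_right δ ε, hε]
        · linarith [hw.1, hw.2, hz1d.1, hz1d.2, min_le_right δ ε, hε]
      · obtain ⟨w, hw⟩ := exists_mem_win hI h
        refine ⟨w, hJ0win y hy z1 hz1J w hw.1 hw.2, ?_⟩
        rw [Subtype.dist_eq, Real.dist_eq, abs_lt]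
        constructor
        · linarith [hw.1, hw.2, hz1d.1, hz1d.2, min_le_right δ ε, hε]
        · linarith [hw.1, hw.2, hz1d.1, hz1d.2, min_le_right δ ε, hε]
    have hinv : ∀ y ∈ closure J, f^[r0] y ∈ closure J := by
      intro y hy
      have hy0 : y ∈ closure J0 := (closure_minimal hJJ0 isClosed_closure) hy
      have h1 : f^[r0] y ∈ closure (f^[r0] '' J0) :=
        (image_closure_subset_closure_image (hf.iterate r0)) ⟨y, hy0, rfl⟩
      exact (closure_minimal hClaimB isClosed_closure) h1
    -- sign of f^[r0] on J
    have hsign : (∀ y ∈ J, (y : ℝ) < (f^[r0] y : ℝ)) ∨ (∀ y ∈ J, ((f^[r0] y : ℝ)) < y) := by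
      by_contra hcon2
      push_neg at hcon2
      obtain ⟨⟨y1, hy1, h1⟩, ⟨y2, hy2, h2⟩⟩ := hcon2
      obtain ⟨z, hzJ, hzeq⟩ := hJpre.intermediate_value₂ hy1 hy2
        (f := fun y => ((f^[r0] y : ℝ))) (g := fun y : ↥I => (y : ℝ))
        ((continuous_subtype_val.comp (hf.iterate r0)).continuousOn)
        continuous_subtype_val.continuousOn h1 h2
      exact hJP z hzJ ⟨r0, hr0pos, Subtype.ext hzeq⟩
    -- two points of J around t for the sequence construction
    obtain ⟨u0, hu0J, v0, hv0J, hu0t, htv0⟩ := htJ0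
    rcases hsign with hplus | hminus
    · have hclo : ∀ y ∈ closure J, (y : ℝ) ≤ (f^[r0] y : ℝ) := by
        have hAcl : IsClosed {y : ↥I | (y : ℝ) ≤ (f^[r0] y : ℝ)} :=
          isClosed_le continuous_subtype_val (continuous_subtype_val.comp (hf.iterate r0))
        intro y hy
        exact (closure_minimal (fun z hz => (hplus z hz).le) hAcl) hy
      have hiter : ∀ m : ℕ, ∀ y ∈ closure J,
          f^[r0 * m] y ∈ closure J ∧ (y : ℝ) ≤ (f^[r0 * m] y : ℝ) := by
        intro m
        induction m with
        | zero =>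
            intro y hy
            simp only [Nat.mul_zero, Function.iterate_zero_apply]
            exact ⟨hy, le_refl _⟩
        | succ m ih =>
            intro y hy
            obtain ⟨h1, h2⟩ := ih y hy
            have heq : f^[r0 * (m + 1)] y = f^[r0] (f^[r0 * m] y) := by
              rw [← Function.iterate_add_apply]
              congr 1
              ring
            constructor
            · rw [heq]; exact hinv _ h1
            · rw [heq]; exact h2.trans (hclo _ h1)
      have hstrict : ∀ m : ℕ, 1 ≤ m → ∀ y ∈ J, (y : ℝ) < (f^[r0 * m] y : ℝ) := by
        intro m hm y hy
        obtain ⟨n, rfl⟩ := Nat.exists_eq_add_of_le hm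
        have h1 : (y : ℝ) < (f^[r0] y : ℝ) := hplus y hy
        have h2 := hiter n (f^[r0] y) (hinv y (subset_closure hy))
        have heq : f^[r0 * n] (f^[r0] y) = f^[r0 * (1 + n)] y := by
          rw [← Function.iterate_add_apply]
          congr 1
          rw [Nat.mul_add, Nat.mul_one]
          exact Nat.add_comm _ _
        exact h1.trans_le (heq ▸ h2.2)
      obtain ⟨g, hg1, hggap, hglow, hgfirst, hgdec⟩ := exists_dec_seq hI htG hu0t r0
      have hanti : StrictAnti (fun k => (f^[g k] t : ℝ)) := strictAnti_nat_of_succ_lt hgdec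
      have hmono : StrictMono g := strictMono_nat_of_lt_succ (fun k => by have := hggap k; omega)
      have hvallt : ∀ k, (f^[g k] t : ℝ) < t := by
        intro k
        induction k with
        | zero => exact hgfirst
        | succ k ih => exact (hgdec k).trans ih
      have hvalJ : ∀ k, f^[g k] t ∈ J := fun k =>
        hJbet' u0 hu0J t htJ _ (hglow k).le (hvallt k).le
      obtain ⟨j, k, hjk, hmod⟩ := exists_mod_pair g hr0pos
      have hgap : g j + r0 < g k := lt_of_lt_of_le (hggap j) (hmono.monotone (Nat.succ_le_of_lt hjk))
      obtain ⟨m, hm⟩ : r0 ∣ (g k - g j) := by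
        refine ⟨g k / r0 - g j / r0, ?_⟩
        have h1 := Nat.div_add_mod (g j) r0
        have h2 := Nat.div_add_mod (g k) r0
        rw [Nat.mul_sub]
        omega
      have hm1 : 1 ≤ m := by
        rcases Nat.eq_zero_or_pos m with h | h
        · rw [h, Nat.mul_zero] at hm; omega
        · exact h
      have hxeq : f^[r0 * m] (f^[g j] t) = f^[g k] t := by
        rw [← Function.iterate_add_apply]
        congr 1
        omega
      have hlt := hstrict m hm1 (f^[g j] t) (hvalJ j)
      rw [hxeq] at hlt
      exact absurd hlt (not_lt.mpr (hanti hjk).le)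
    · have hclo : ∀ y ∈ closure J, ((f^[r0] y : ℝ)) ≤ y := by
        have hAcl : IsClosed {y : ↥I | ((f^[r0] y : ℝ)) ≤ y} :=
          isClosed_le (continuous_subtype_val.comp (hf.iterate r0)) continuous_subtype_val
        intro y hy
        exact (closure_minimal (fun z hz => (hminus z hz).le) hAcl) hy
      have hiter : ∀ m : ℕ, ∀ y ∈ closure J,
          f^[r0 * m] y ∈ closure J ∧ ((f^[r0 * m] y : ℝ)) ≤ y := by
        intro m
        induction m with
        | zero =>
            intro y hy
            simp only [Nat.mul_zero, Function.iterate_zero_apply]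
            exact ⟨hy, le_refl _⟩
        | succ m ih =>
            intro y hy
            obtain ⟨h1, h2⟩ := ih y hy
            have heq : f^[r0 * (m + 1)] y = f^[r0] (f^[r0 * m] y) := by
              rw [← Function.iterate_add_apply]
              congr 1
              ring
            constructor
            · rw [heq]; exact hinv _ h1
            · rw [heq]; exact (hclo _ h1).trans h2
      have hstrict : ∀ m : ℕ, 1 ≤ m → ∀ y ∈ J, ((f^[r0 * m] y : ℝ)) < y := by
        intro m hm y hy
        obtain ⟨n, rfl⟩ := Nat.exists_eq_add_of_le hm
        have h1 : ((f^[r0] y : ℝ)) < y := hminus y hy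
        have h2 := hiter n (f^[r0] y) (hinv y (subset_closure hy))
        have heq : f^[r0 * n] (f^[r0] y) = f^[r0 * (1 + n)] y := by
          rw [← Function.iterate_add_apply]
          congr 1
          rw [Nat.mul_add, Nat.mul_one]
          exact Nat.add_comm _ _
        exact lt_of_le_of_lt (heq ▸ h2.2) h1
      obtain ⟨g, hg1, hggap, hghigh, hgfirst, hginc⟩ := exists_inc_seq hI htG htv0 r0
      have hmonov : StrictMono (fun k => (f^[g k] t : ℝ)) := strictMono_nat_of_lt_succ hginc
      have hmono : StrictMono g := strictMono_nat_of_lt_succ (fun k => by have := hggap k; omega)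
      have hvalgt : ∀ k, (t : ℝ) < (f^[g k] t : ℝ) := by
        intro k
        induction k with
        | zero => exact hgfirst
        | succ k ih => exact ih.trans (hginc k)
      have hvalJ : ∀ k, f^[g k] t ∈ J := fun k =>
        hJbet' t htJ v0 hv0J _ (hvalgt k).le (hghigh k).le
      obtain ⟨j, k, hjk, hmod⟩ := exists_mod_pair g hr0pos
      have hgap : g j + r0 < g k := lt_of_lt_of_le (hggap j) (hmono.monotone (Nat.succ_le_of_lt hjk))
      obtain ⟨m, hm⟩ : r0 ∣ (g k - g j) := by
        refine ⟨g k / r0 - g j / r0, ?_⟩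
        have h1 := Nat.div_add_mod (g j) r0
        have h2 := Nat.div_add_mod (g k) r0
        rw [Nat.mul_sub]
        omega
      have hm1 : 1 ≤ m := by
        rcases Nat.eq_zero_or_pos m with h | h
        · rw [h, Nat.mul_zero] at hm; omega
        · exact h
      have hxeq : f^[r0 * m] (f^[g j] t) = f^[g k] t := by
        rw [← Function.iterate_add_apply]
        congr 1
        omega
      have hlt := hstrict m hm1 (f^[g j] t) (hvalJ j)
      rw [hxeq] at hlt
      exact absurd hlt (not_lt.mpr (hmonov hjk).le)


lemma dense_perPts (hI : I.OrdConnected) (hnd : ∃ a b : ℝ, a ∈ I ∧ b ∈ I ∧ a ≠ b)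
    (f : ↥I → ↥I) (hf : Continuous f) (htrans : TopTransitive f) : Dense (PerPts f) := by
  rw [dense_iff_inter_open]
  intro U hU hUne
  obtain ⟨x, h1, h2⟩ := perPts_inter_nonempty hI hnd f hf htrans hU hUne
  exact ⟨x, h1, h2⟩

lemma interior_perPts_empty (hI : I.OrdConnected) (hnd : ∃ a b : ℝ, a ∈ I ∧ b ∈ I ∧ a ≠ b)
    (f : ↥I → ↥I) (hf : Continuous f) (htrans : TopTransitive f) :
    interior (PerPts f) = ∅ := by
  by_contra hne
  rw [← Set.not_nonempty_iff_eq_empty, not_not] at hne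
  have hdense := dense_goodPt hI hnd f hf htrans
  obtain ⟨t, htG, htint⟩ := hdense.exists_mem_open isOpen_interior hne
  have htP : t ∈ PerPts f := interior_subset htint
  obtain ⟨q, hq, hqfix⟩ := htP
  set A : Set ↥I := (fun m => f^[m] t) '' {m | m < q} with hA
  have hAfin : A.Finite := (Set.finite_Iio q).image _
  have hAdense : Dense A := by
    rw [dense_iff_inter_open]
    intro W hW hWne
    obtain ⟨n, _, hmem⟩ := htG W hW hWne 0
    exact ⟨f^[n] t, hmem, ⟨n % q, Nat.mod_lt _ hq, (iterate_mod hqfix n).symm⟩⟩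
  have h1 : closure A = univ := hAdense.closure_eq
  have h2 : closure A = A := hAfin.isClosed.closure_eq
  have huniv : (univ : Set ↥I).Finite := by
    rw [← h1, h2]; exact hAfin
  exact (isOpen_infinite hI hnd isOpen_univ ⟨t, trivial⟩) huniv

lemma isClosed_perPtsLe (f : ↥I → ↥I) (hf : Continuous f) (n : ℕ) :
    IsClosed (PerPtsLe f n) := by
  have hEq : PerPtsLe f n = ⋃ m ∈ {m : ℕ | 0 < m ∧ m ≤ n}, {x : ↥I | f^[m] x = x} := by
    ext x
    simp only [PerPtsLe, mem_setOf_eq, mem_iUnion, exists_prop]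
    tauto
  rw [hEq]
  apply Set.Finite.isClosed_biUnion
  · exact (Set.finite_Iic n).subset (fun m hm => hm.2)
  · intro m _
    exact isClosed_eq (hf.iterate m) continuous_id

end ITDP

/-- for a transitive continuous map of a nondegenerate real interval,
the periodic points are dense with empty interior, hence `P \ P_n` is dense for
every positive `n`. -/
theorem interval_transitive_dense_periodic
    (I : Set ℝ) (hI : I.OrdConnected)
    (hnd : ∃ a b : ℝ, a ∈ I ∧ b ∈ I ∧ a ≠ b)
    (f : I → I) (hf : Continuous f)
    (htrans : TopTransitive f) :
    Dense (PerPts f) ∧ interior (PerPts f) = ∅ ∧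
      ∀ n : ℕ, 0 < n → Dense (PerPts f \ PerPtsLe f n) := by
  have hdense : Dense (PerPts f) := ITDP.dense_perPts hI hnd f hf htrans
  have hint : interior (PerPts f) = ∅ := ITDP.interior_perPts_empty hI hnd f hf htrans
  refine ⟨hdense, hint, ?_⟩
  intro n _
  have hclosed := ITDP.isClosed_perPtsLe f hf n
  have hsub : PerPtsLe f n ⊆ PerPts f := by
    rintro x ⟨m, h1, _, h3⟩
    exact ⟨m, h1, h3⟩
  have hintn : interior (PerPtsLe f n) = ∅ :=
    eq_empty_of_subset_empty ((interior_mono hsub).trans hint.subset)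
  have hcompl : Dense (PerPtsLe f n)ᶜ := interior_eq_empty_iff_dense_compl.mp hintn
  have hfinal := hdense.inter_of_isOpen_right hcompl hclosed.isOpen_compl
  rw [Set.diff_eq]
  exact hfinal
end

section
/- Let (X, f) be a dynamical system with X infinite and f topologically transitive. Then the set P of periodic points of f is dense in X if and only if (X, f) has DLP, i.e., P \ P_n is dense in X for every positive integer n. -/
open Function Set

/-- Iterates of a point fixed by `f^[N]` reduce mod `N`. -/
lemma iterate_mod_aux {X : Type*} (f : X → X) {N : ℕ} {y : X}
    (hy : f^[N] y = y) (m : ℕ) : f^[m] y = f^[m % N] y := by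
  conv_lhs => rw [← Nat.mod_add_div m N]
  rw [Function.iterate_add_apply, Function.iterate_mul, Function.iterate_fixed hy]

/-- for an infinite transitive system, dense periodic points is
equivalent to DLP. -/
theorem densePeriodic_iff_dlp
    {X : Type*} [TopologicalSpace X] [T2Space X] [Infinite X]
    (f : X → X) (hf : Continuous f)
    (htrans : TopTransitive f) :
    Dense (PerPts f) ↔ ∀ n : ℕ, 0 < n → Dense (PerPts f \ PerPtsLe f n) := by
  constructor
  · intro hP n hn
    rw [dense_iff_inter_open]
    intro U hU hUne
    by_contra hcon
    rw [Set.not_nonempty_iff_eq_empty] at hcon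
    set N := n.factorial with hNdef
    have hN : 0 < N := n.factorial_pos
    -- every periodic point in U is fixed by f^[N]
    have hfix : ∀ p ∈ U, p ∈ PerPts f → f^[N] p = p := by
      intro p hpU hpP
      have hpn : p ∈ PerPtsLe f n := by
        by_contra hnot
        have : p ∈ U ∩ (PerPts f \ PerPtsLe f n) := ⟨hpU, hpP, hnot⟩
        rw [hcon] at this
        exact this
      obtain ⟨m, hm0, hmn, hmp⟩ := hpn
      obtain ⟨k, hk⟩ := Nat.dvd_factorial hm0 hmn
      rw [hNdef, hk, Function.iterate_mul, Function.iterate_fixed hmp]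
    -- hence all of U is fixed by f^[N]
    have hUfix : ∀ u ∈ U, f^[N] u = u := by
      have hclosed : IsClosed {y : X | f^[N] y = y} :=
        isClosed_eq (hf.iterate N) continuous_id
      have hsub : closure (U ∩ PerPts f) ⊆ {y : X | f^[N] y = y} :=
        closure_minimal (fun p hp => hfix p hp.1 hp.2) hclosed
      intro u hu
      exact hsub (hP.open_subset_closure_inter hU hu)
    obtain ⟨x, hxU⟩ := hUne
    have hxN : f^[N] x = x := hUfix x hxU
    -- a point outside the (finite) orbit of x
    have hOfin : ((fun k => f^[k] x) '' {k | k < N}).Finite :=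
      (Set.finite_Iio N).image _
    obtain ⟨w, hw⟩ := hOfin.infinite_compl.nonempty
    have hneq : ∀ k : ℕ, f^[k] x ≠ w := by
      intro k h
      exact hw ⟨k % N, Nat.mod_lt k hN, by show f^[k % N] x = w; rw [← iterate_mod_aux f hxN k]; exact h⟩
    choose A B hAo hBo hA hB hAB using fun k => t2_separation (hneq k)
    set V : Set X := U ∩ ⋂ k ∈ Finset.range N, f^[k] ⁻¹' A k with hVdef
    set W : Set X := ⋂ k ∈ Finset.range N, B k with hWdef
    have hVo : IsOpen V :=
      hU.inter (isOpen_biInter_finset fun k _ => (hAo k).preimage (hf.iterate k))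
    have hWo : IsOpen W := isOpen_biInter_finset fun k _ => hBo k
    have hxV : x ∈ V := ⟨hxU, Set.mem_iInter₂.mpr fun k _ => hA k⟩
    have hwW : w ∈ W := Set.mem_iInter₂.mpr fun k _ => hB k
    obtain ⟨m, hm, y, ⟨v, hvV, rfl⟩, hyW⟩ :=
      htrans V W hVo hWo ⟨x, hxV⟩ ⟨w, hwW⟩
    have hvU : v ∈ U := hvV.1
    have hvN : f^[N] v = v := hUfix v hvU
    have hr : m % N < N := Nat.mod_lt m hN
    have h1 : f^[m] v ∈ A (m % N) := by
      rw [iterate_mod_aux f hvN m]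
      exact Set.mem_iInter₂.mp hvV.2 (m % N) (Finset.mem_range.mpr hr)
    have h2 : f^[m] v ∈ B (m % N) :=
      Set.mem_iInter₂.mp hyW (m % N) (Finset.mem_range.mpr hr)
    exact Set.disjoint_left.mp (hAB (m % N)) h1 h2
  · intro h
    exact (h 1 one_pos).mono Set.diff_subset
end
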